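/- arXiv:2111.03725 — 5 statements merged into one kernel-verified Lean document; each statement's English description precedes it below -/
import Mathlib

section
/- Let G be a finite simple graph and q,k ∈ ℕ such that V(G) is (q,k)-unbreakable in G. Let S ⊆ V(G) with |S| ≤ k and let s,t ∈ V(G) \ S be distinct vertices. Then there is no s–t path in G avoiding all vertices of S if and only if there exists a set A ⊆ V(G) with |A| ≤ q that contains exactly one of s and t and such that every vertex outside A that is adjacent in G to a vertex of A belongs to S. -/
/-- Two vertices are connected by a walk all of whose vertices lie in `U`. -/
def ConnIn {V : Type*} (G : SimpleGraph V) (U : Set V) (a b : V) : Prop :=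
  ∃ p : G.Walk a b, ∀ w ∈ p.support, w ∈ U

/-- `X` is `(q,k)`-unbreakable in the induced subgraph `G[U]`: for every separation `(A,B)`
of `G[U]` of order at most `k`, one of the two sides contains at most `q` vertices of `X`. -/
def UnbreakableIn {V : Type*} (G : SimpleGraph V) (U X : Set V) (q k : ℕ) : Prop :=
  ∀ A B : Set V, A ⊆ U → B ⊆ U → A ∪ B = U →
    (∀ a ∈ A \ B, ∀ b ∈ B \ A, ¬ G.Adj a b) →
    (A ∩ B).ncard ≤ k →
    (A ∩ X).ncard ≤ q ∨ (B ∩ X).ncard ≤ q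

private lemma exists_cross {V : Type*} (G : SimpleGraph V) (A : Set V) :
    ∀ {a b : V} (p : G.Walk a b), a ∈ A → b ∉ A →
      ∃ x y, x ∈ A ∧ y ∉ A ∧ G.Adj x y ∧ y ∈ p.support := by
  intro a b p
  induction p with
  | nil => intro h h'; exact absurd h h'
  | @cons u v w h p ih =>
    intro ha hb
    by_cases hv : v ∈ A
    · obtain ⟨x, y, hx, hy, hxy, hmem⟩ := ih hv hb
      exact ⟨x, y, hx, hy, hxy, by simp [hmem]⟩
    · exact ⟨u, v, ha, hv, h, by simp⟩

/-- If `V(G)` is `(q,k)`-unbreakable in `G`, `|S| ≤ k` and `s ≠ t` are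
vertices outside `S`, then there is no `s`–`t` path in `G` avoiding all vertices of `S`
iff there is a set `A` of at most `q` vertices containing exactly one of `s` and `t`
such that every vertex outside `A` adjacent to a vertex of `A` belongs to `S`. -/
theorem stmt0 {V : Type*} [Fintype V] (G : SimpleGraph V) (q k : ℕ)
    (hunb : UnbreakableIn G Set.univ Set.univ q k)
    (S : Set V) (hSk : S.ncard ≤ k)
    (s t : V) (hs : s ∉ S) (ht : t ∉ S) (hst : s ≠ t) :
    (¬ ConnIn G Sᶜ s t) ↔
      ∃ A : Set V, A.ncard ≤ q ∧
        ((s ∈ A ∧ t ∉ A) ∨ (t ∈ A ∧ s ∉ A)) ∧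
        (∀ u : V, u ∉ A → (∃ v ∈ A, G.Adj u v) → u ∈ S) := by
  constructor
  · intro hnc
    -- reachable set from s inside Sᶜ
    set R : Set V := {x | ConnIn G Sᶜ s x} with hR
    have hsR : s ∈ R := ⟨SimpleGraph.Walk.nil, by simpa using hs⟩
    have hRS : R ⊆ Sᶜ := by
      rintro x ⟨p, hp⟩
      exact hp x p.end_mem_support
    have hext : ∀ u ∈ R, ∀ v, v ∉ S → G.Adj u v → v ∈ R := by
      rintro u ⟨p, hp⟩ v hv huv
      refine ⟨p.append (SimpleGraph.Walk.cons huv SimpleGraph.Walk.nil), ?_⟩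
      intro w hw
      rw [SimpleGraph.Walk.mem_support_append_iff] at hw
      rcases hw with hw | hw
      · exact hp w hw
      · simp only [SimpleGraph.Walk.support_cons, SimpleGraph.Walk.support_nil,
          List.mem_cons, List.not_mem_nil, or_false] at hw
        rcases hw with rfl | rfl
        · exact hp w p.end_mem_support
        · exact hv
    have htR : t ∉ R := hnc
    have hsep := hunb (R ∪ S) Rᶜ (Set.subset_univ _) (Set.subset_univ _)
      (by ext x; by_cases hx : x ∈ R <;> simp [hx])
      (by
        rintro a ⟨haRS, haR⟩ b ⟨hbR, hbRS⟩ hab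
        rw [Set.mem_compl_iff, not_not] at haR
        have hbnS : b ∉ S := fun h => hbRS (Or.inr h)
        exact hbR (hext a haR b hbnS hab))
      (by
        refine le_trans (Set.ncard_le_ncard ?_ S.toFinite) hSk
        rintro x ⟨hx1, hx2⟩
        rcases hx1 with h | h
        · exact absurd h hx2
        · exact h)
    simp only [Set.inter_univ] at hsep
    rcases hsep with hq | hq
    · refine ⟨R, le_trans (Set.ncard_le_ncard Set.subset_union_left (Set.toFinite _)) hq,
        Or.inl ⟨hsR, htR⟩, ?_⟩
      rintro u huR ⟨v, hvR, huv⟩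
      by_contra huS
      exact huR (hext v hvR u huS huv.symm)
    · refine ⟨Rᶜ ∩ Sᶜ, le_trans (Set.ncard_le_ncard Set.inter_subset_left (Set.toFinite _)) hq,
        Or.inr ⟨⟨htR, ht⟩, fun h => h.1 hsR⟩, ?_⟩
      rintro u hu ⟨v, ⟨hvR, hvS⟩, huv⟩
      by_contra huS
      have huR : u ∈ R := by
        rcases (Set.mem_union u R S).mp (by
          have : u ∈ (Rᶜ ∩ Sᶜ)ᶜ := hu
          rw [Set.compl_inter, compl_compl, compl_compl] at this
          exact this) with h | h
        · exact h
        · exact absurd h huS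
      exact hvR (hext u huR v hvS huv)
  · rintro ⟨A, _, hmem, hbound⟩ ⟨p, hp⟩
    have key : ∀ {a b : V} (w : G.Walk a b), (∀ x ∈ w.support, x ∈ Sᶜ) →
        a ∈ A → b ∉ A → False := by
      intro a b w hw ha hb
      obtain ⟨x, y, hx, hy, hxy, hmem'⟩ := exists_cross G A w ha hb
      exact (hw y hmem') (hbound y hy ⟨x, hx, hxy.symm⟩)
    rcases hmem with ⟨hsA, htA⟩ | ⟨htA, hsA⟩
    · exact key p hp hsA htA
    · exact key p.reverse (by intro x hx; exact hp x (by simpa using hx)) htA hsA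
end

section
/- Let (T,bag) be a regular rooted tree decomposition of a finite graph G of adhesion at most a. Then Σ_{x ∈ V(T)} |V(bgraph(x))| ≤ (a+2)·|V(G)|, and Σ_{x ∈ V(T)} (|V(bgraph(x))| + |E(bgraph(x))|) ≤ (|V(G)| + |E(G)|) + (a+2)²·|V(G)|. -/
/-- A finite rooted tree, encoded by its parent function. -/
structure RTree (ι : Type*) where
  root : ι
  parent : ι → ι
  parent_root : parent root = root
  reaches_root : ∀ x : ι, ∃ n : ℕ, parent^[n] x = root

namespace RTree

variable {ι : Type*} (T : RTree ι)

/-- `T.Anc x y` means `x` is an ancestor of `y` (every node is its own ancestor). -/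
def Anc (x y : ι) : Prop := ∃ n : ℕ, T.parent^[n] y = x

/-- `T.IsChild y x` means `y` is a child of `x`. -/
def IsChild (y x : ι) : Prop := y ≠ T.root ∧ T.parent y = x

/-- The underlying undirected graph of the rooted tree. -/
def treeGraph : SimpleGraph ι where
  Adj x y := x ≠ y ∧ (T.IsChild x y ∨ T.IsChild y x)
  symm := ⟨fun x y h => ⟨h.1.symm, h.2.symm⟩⟩
  loopless := ⟨fun x h => h.1 rfl⟩

end RTree

theorem ConnIn.symm {V : Type*} {G : SimpleGraph V} {U : Set V} {a b : V}
    (h : ConnIn G U a b) : ConnIn G U b a := by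
  obtain ⟨p, hp⟩ := h
  refine ⟨p.reverse, fun w hw => hp w ?_⟩
  rwa [SimpleGraph.Walk.support_reverse, List.mem_reverse] at hw

/-- A rooted tree decomposition of the graph `G`, with nodes indexed by `ι`. -/
structure TreeDecomp {V : Type*} (G : SimpleGraph V) (ι : Type*) extends RTree ι where
  bag : ι → Set V
  /-- (T1) for every vertex, the set of nodes whose bag contains it
  is a nonempty subtree of the tree. -/
  bag_subtree : ∀ u : V, ((toRTree.treeGraph).induce {x : ι | u ∈ bag x}).Connected
  /-- (T2) every edge is contained in some bag. -/
  bag_edge : ∀ u v : V, G.Adj u v → ∃ x : ι, u ∈ bag x ∧ v ∈ bag x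

namespace TreeDecomp

variable {V ι : Type*} {G : SimpleGraph V} (D : TreeDecomp G ι)

/-- The adhesion of a node: intersection of its bag with the bag of its parent
(empty at the root). -/
def adh (x : ι) : Set V :=
  {v : V | x ≠ D.root ∧ v ∈ D.bag (D.parent x) ∧ v ∈ D.bag x}

/-- The margin of a node. -/
def mrg (x : ι) : Set V := D.bag x \ D.adh x

/-- The cone at a node: union of the bags at all its descendants. -/
def cone (x : ι) : Set V := {v : V | ∃ y : ι, D.toRTree.Anc x y ∧ v ∈ D.bag y}

/-- The component at a node. -/
def comp (x : ι) : Set V := D.cone x \ D.adh x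

/-- A tree decomposition is regular if every non-root node has nonempty margin,
connected component, and every adhesion vertex has a neighbour in the component. -/
def Regular : Prop :=
  ∀ x : ι, x ≠ D.root →
    (D.mrg x).Nonempty ∧
    (G.induce (D.comp x)).Connected ∧
    ∀ u ∈ D.adh x, ∃ w ∈ D.comp x, G.Adj u w

end TreeDecomp

namespace TreeDecomp

variable {V ι : Type*} {G : SimpleGraph V} (D : TreeDecomp G ι)

/-- The bag graph at a node `x`: its vertices are the elements of `bag(x)` together with
the children of `x`; two bag vertices are adjacent iff they are adjacent in `G`, a bag
vertex is adjacent to a child `y` iff it has a `G`-neighbour in `comp(y)`, and no two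
children are adjacent. -/
def bgraph (x : ι) : SimpleGraph (↥(D.bag x) ⊕ {y : ι // D.toRTree.IsChild y x}) where
  Adj a b :=
    match a, b with
    | Sum.inl u, Sum.inl v => G.Adj u v
    | Sum.inl u, Sum.inr y => ∃ w ∈ D.comp y.1, G.Adj (u : V) w
    | Sum.inr y, Sum.inl u => ∃ w ∈ D.comp y.1, G.Adj (u : V) w
    | Sum.inr _, Sum.inr _ => False
  symm := by
    constructor
    rintro (u | y) (v | z) h
    · exact G.adj_symm h
    · exact h
    · exact h
    · exact h
  loopless := by
    constructor
    rintro (u | y) h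
    · exact G.irrefl h
    · exact h

end TreeDecomp

/-!
The margins `mrg x` are pairwise disjoint (a vertex is in the margin only of the top node of its
subtree) and nonempty at non-root nodes, so there are at most `|V(G)|` non-root nodes and
`∑ |bag x| ≤ |V(G)| + ∑ |adh x| ≤ (a + 1)·|V(G)|`; the children add one vertex per non-root node.
An edge of `bgraph x` inside the bag is an edge of `G` that either has an end in `mrg x`, which
happens at one node at most, or lies inside `adh x`, giving at most `a²` per node. An edge from
`u ∈ bag x` into a child `y` forces `u ∈ adh y`, giving at most `a` per non-root node.
-/

open Finset Function

namespace RTree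

variable {ι : Type*} (T : RTree ι)

instance [DecidableEq ι] (x : ι) : DecidablePred (T.IsChild · x) :=
  fun _ => instDecidableAnd

theorem anc_refl (x : ι) : T.Anc x x := ⟨0, rfl⟩

theorem root_anc (x : ι) : T.Anc T.root x := T.reaches_root x

variable {T}

theorem Anc.of_parent {x y : ι} (h : T.Anc x (T.parent y)) : T.Anc x y := by
  obtain ⟨n, hn⟩ := h
  exact ⟨n + 1, by rwa [Function.iterate_succ_apply]⟩

theorem Anc.parent {x y : ι} (h : T.Anc x y) (hne : y ≠ x) : T.Anc x (T.parent y) := by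
  obtain ⟨_ | n, hn⟩ := h
  · exact absurd hn hne
  · exact ⟨n, by rwa [Function.iterate_succ_apply] at hn⟩

/-- Iterating `parent` long enough from any node lands at the fixed point `root`, so no other
node can be periodic. -/
theorem eq_root_of_iterate_eq_self {x : ι} {k : ℕ} (hk : 0 < k) (h : T.parent^[k] x = x) :
    x = T.root := by
  obtain ⟨d, hd⟩ := T.reaches_root x
  calc x = T.parent^[k * d] x := (Function.IsPeriodicPt.mul_const h d).eq.symm
    _ = T.root := by
      rw [← Nat.sub_add_cancel (Nat.le_mul_of_pos_left d hk), Function.iterate_add_apply, hd,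
        Function.iterate_fixed T.parent_root]

theorem Anc.antisymm {x y : ι} (h₁ : T.Anc x y) (h₂ : T.Anc y x) : x = y := by
  obtain ⟨n, hn⟩ := h₁
  obtain ⟨m, hm⟩ := h₂
  rcases Nat.eq_zero_or_pos (n + m) with h0 | hpos
  · obtain ⟨rfl, rfl⟩ : n = 0 ∧ m = 0 := by omega
    exact hn.symm
  · have hx : x = T.root :=
      eq_root_of_iterate_eq_self hpos (by rw [Function.iterate_add_apply, hm, hn])
    rw [← hm, hx, Function.iterate_fixed T.parent_root]

theorem not_anc_parent {y : ι} (hy : y ≠ T.root) : ¬ T.Anc y (T.parent y) := fun ⟨n, hn⟩ =>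
  hy (eq_root_of_iterate_eq_self n.succ_pos (by rwa [Function.iterate_succ_apply]))

/-- A walk from a descendant of `y` to a non-descendant must use the tree edge from `y` to its
parent. -/
theorem mem_and_parent_mem_of_connected {S : Set ι} (hS : (T.treeGraph.induce S).Connected)
    {y z x : ι} (hz : z ∈ S) (hx : x ∈ S) (hyz : T.Anc y z) (hyx : ¬ T.Anc y x) :
    y ∈ S ∧ T.parent y ∈ S := by
  suffices ∀ {z x : S}, (T.treeGraph.induce S).Walk z x → T.Anc y z → ¬ T.Anc y x →
      y ∈ S ∧ T.parent y ∈ S from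
    this (hS ⟨z, hz⟩ ⟨x, hx⟩).some hyz hyx
  intro z x p hyz hyx
  induction p with
  | nil => exact absurd hyz hyx
  | @cons u v w huv p ih =>
    by_cases hyv : T.Anc y v.1
    · exact ih hyv hyx
    obtain ⟨-, ⟨-, hu : T.parent u.1 = v.1⟩ | ⟨-, hv : T.parent v.1 = u.1⟩⟩ := huv
    · obtain rfl | hne := eq_or_ne u.1 y
      · exact ⟨u.2, hu ▸ v.2⟩
      · exact absurd (hu ▸ hyz.parent hne) hyv
    · exact absurd (hv ▸ hyz).of_parent hyv

variable (T)

theorem sum_sum_children [Fintype ι] [DecidableEq ι] {M : Type*} [AddCommMonoid M]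
    (f : ι → M) : ∑ x, ∑ y : {y // T.IsChild y x}, f y = ∑ y ∈ univ.erase T.root, f y := by
  rw [← Finset.sum_fiberwise (univ.erase T.root) T.parent f]
  refine Finset.sum_congr rfl fun x _ => ?_
  rw [← Finset.sum_subtype (p := (T.IsChild · x))]
  simp [RTree.IsChild]

theorem sum_card_children [Fintype ι] [DecidableEq ι] :
    ∑ x, Nat.card {y // T.IsChild y x} = #(univ.erase T.root) := by
  simp only [Nat.card_eq_fintype_card, Fintype.card_eq_sum_ones, card_eq_sum_ones]
  exact T.sum_sum_children (fun _ => 1)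

end RTree

theorem Set.sum_ncard_le_ncard_of_pairwiseDisjoint {α ι : Type*} [Fintype ι] {s : ι → Set α}
    {t : Set α} (ht : t.Finite) (hst : ∀ i, s i ⊆ t) (hs : Pairwise (Disjoint on s)) :
    ∑ i, (s i).ncard ≤ t.ncard := by
  rw [← finsum_eq_sum_of_fintype, ← Set.ncard_iUnion_of_finite (fun i => ht.subset (hst i)) hs]
  exact Set.ncard_le_ncard (Set.iUnion_subset hst) ht

theorem Set.ncard_sym2_le {α : Type*} [Finite α] (s : Set α) : s.sym2.ncard ≤ s.ncard ^ 2 := by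
  rw [Set.sym2_eq_mk_image, sq, ← Set.ncard_prod]
  exact Set.ncard_image_le

theorem Finset.sum_le_mul_card_erase {ι : Type*} [Fintype ι] [DecidableEq ι] {f : ι → ℕ} {i : ι}
    {b : ℕ} (hi : f i = 0) (hf : ∀ j, f j ≤ b) : ∑ j, f j ≤ b * #(univ.erase i) := by
  rw [← Finset.sum_erase univ hi, mul_comm, ← smul_eq_mul]
  exact Finset.sum_le_card_nsmul _ _ _ fun j _ => hf j

theorem SimpleGraph.ncard_edgeSet_sum_le {α β : Type*} [Finite α] [Finite β]
    (H : SimpleGraph (α ⊕ β)) (h : ∀ b b', ¬ H.Adj (.inr b) (.inr b')) :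
    H.edgeSet.ncard ≤
      (H.comap Sum.inl).edgeSet.ncard + {p : α × β | H.Adj (.inl p.1) (.inr p.2)}.ncard := by
  have hsub : H.edgeSet ⊆ Sym2.map Sum.inl '' (H.comap Sum.inl).edgeSet ∪
      (fun p : α × β => s(.inl p.1, .inr p.2)) '' {p | H.Adj (.inl p.1) (.inr p.2)} := by
    rintro ⟨a | b, a' | b'⟩ he
    · exact .inl ⟨s(a, a'), he, rfl⟩
    · exact .inr ⟨(a, b'), he, rfl⟩
    · exact .inr ⟨(a', b), he.symm, Sym2.eq_swap⟩
    · exact (h b b' he).elim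
  calc H.edgeSet.ncard ≤ _ := Set.ncard_le_ncard hsub
    _ ≤ _ := Set.ncard_union_le _ _
    _ ≤ _ := add_le_add Set.ncard_image_le Set.ncard_image_le

namespace TreeDecomp

variable {V ι : Type*} {G : SimpleGraph V} (D : TreeDecomp G ι)

theorem adh_root : D.adh D.root = ∅ :=
  Set.eq_empty_of_forall_notMem fun _ h => h.1 rfl

variable {D}

theorem anc_of_mem_mrg {u : V} {x z : ι} (hu : u ∈ D.mrg x) (hz : u ∈ D.bag z) :
    D.Anc x z := by
  by_contra hxz
  obtain rfl | hx := eq_or_ne x D.root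
  · exact hxz (D.root_anc z)
  obtain ⟨hux, hpx⟩ := RTree.mem_and_parent_mem_of_connected (D.bag_subtree u) hu.1 hz
    (D.anc_refl x) hxz
  exact hu.2 ⟨hx, hpx, hux⟩

theorem eq_of_mem_mrg_of_mem_mrg {u : V} {x x' : ι} (hu : u ∈ D.mrg x) (hu' : u ∈ D.mrg x') :
    x = x' :=
  (anc_of_mem_mrg hu hu'.1).antisymm (anc_of_mem_mrg hu' hu.1)

theorem exists_mem_mrg_of_mem_sym2_diff {e : Sym2 V} {x : ι}
    (he : e ∈ (D.bag x).sym2 \ (D.adh x).sym2) : ∃ w ∈ e, w ∈ D.mrg x := by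
  induction e using Sym2.inductionOn with
  | _ u v =>
    obtain ⟨⟨hu, hv⟩, huv⟩ := he
    by_cases hua : u ∈ D.adh x
    · exact ⟨v, Sym2.mem_mk_right u v, hv, fun hva => huv ⟨hua, hva⟩⟩
    · exact ⟨u, Sym2.mem_mk_left u v, hu, hua⟩

variable (D)

theorem pairwise_disjoint_mrg : Pairwise (Disjoint on D.mrg) := fun _ _ hne =>
  Set.disjoint_left.mpr fun _ hu hu' => hne (eq_of_mem_mrg_of_mem_mrg hu hu')

theorem pairwise_disjoint_sym2_bag_diff_sym2_adh :
    Pairwise (Disjoint on fun x => (D.bag x).sym2 \ (D.adh x).sym2) := by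
  refine fun x x' hne => Set.disjoint_left.mpr fun e he he' => hne ?_
  obtain ⟨w, hwe, hw⟩ := exists_mem_mrg_of_mem_sym2_diff he
  obtain ⟨w', hwe', hw'⟩ := exists_mem_mrg_of_mem_sym2_diff he'
  exact (anc_of_mem_mrg hw (Set.mem_sym2_iff_subset.mp he'.1 hwe)).antisymm
    (anc_of_mem_mrg hw' (Set.mem_sym2_iff_subset.mp he.1 hwe'))

variable {D}

/-- Both ends of an edge lie in a common bag, which must be below `y` because `w` is in
`comp y`; the subtree of `u` then joins it to `parent y`, so passes through `y`. -/
theorem mem_adh_of_adj_mem_comp {x y : ι} {u w : V} (hyx : D.IsChild y x) (hu : u ∈ D.bag x)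
    (hw : w ∈ D.comp y) (huw : G.Adj u w) : u ∈ D.adh y := by
  obtain ⟨z, huz, hwz⟩ := D.bag_edge u w huw
  obtain ⟨⟨y', hyy', hwy'⟩, hwa⟩ := hw
  have hyz : D.Anc y z := by
    by_contra hyz
    obtain ⟨hwy, hwp⟩ := RTree.mem_and_parent_mem_of_connected (D.bag_subtree w) hwy' hwz hyy' hyz
    exact hwa ⟨hyx.1, hwp, hwy⟩
  have hyx' : ¬ D.Anc y x := hyx.2 ▸ D.not_anc_parent hyx.1
  obtain ⟨huy, hup⟩ := RTree.mem_and_parent_mem_of_connected (D.bag_subtree u) huz hu hyz hyx'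
  exact ⟨hyx.1, hup, huy⟩

variable (D) [Fintype ι]

theorem sum_ncard_mrg_le [Finite V] : ∑ x, (D.mrg x).ncard ≤ Nat.card V := by
  simpa using Set.sum_ncard_le_ncard_of_pairwiseDisjoint Set.finite_univ
    (fun x => Set.subset_univ (D.mrg x)) D.pairwise_disjoint_mrg

theorem card_erase_root_le [Finite V] [DecidableEq ι] (hreg : D.Regular) :
    #(univ.erase D.root) ≤ Nat.card V :=
  calc #(univ.erase D.root) = ∑ _ ∈ univ.erase D.root, 1 := card_eq_sum_ones _
    _ ≤ ∑ x ∈ univ.erase D.root, (D.mrg x).ncard := sum_le_sum fun x hx =>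
        (Set.ncard_pos (Set.toFinite _)).mpr (hreg x (ne_of_mem_erase hx)).1
    _ ≤ ∑ x, (D.mrg x).ncard := sum_le_univ_sum_of_nonneg fun _ => Nat.zero_le _
    _ ≤ Nat.card V := D.sum_ncard_mrg_le

variable {D} {a : ℕ}

theorem sum_ncard_adh_le [DecidableEq ι] (hadh : ∀ x, (D.adh x).ncard ≤ a) :
    ∑ x, (D.adh x).ncard ≤ a * #(univ.erase D.root) :=
  sum_le_mul_card_erase (by rw [adh_root, Set.ncard_empty]) hadh

theorem sum_card_bgraph_vertices_le [Finite V] [DecidableEq ι]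
    (hadh : ∀ x, (D.adh x).ncard ≤ a) :
    ∑ x, Nat.card (↥(D.bag x) ⊕ {y : ι // D.IsChild y x}) ≤
      Nat.card V + (a + 1) * #(univ.erase D.root) :=
  calc ∑ x, Nat.card (↥(D.bag x) ⊕ {y : ι // D.IsChild y x})
      = ∑ x, (D.bag x).ncard + ∑ x, Nat.card {y : ι // D.IsChild y x} := by
        simp only [Nat.card_sum, Nat.card_coe_set_eq, sum_add_distrib]
    _ ≤ ∑ x, ((D.mrg x).ncard + (D.adh x).ncard) + #(univ.erase D.root) := by
        rw [D.sum_card_children]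
        gcongr with x
        exact Set.ncard_le_ncard_sdiff_add_ncard _ _
    _ ≤ Nat.card V + a * #(univ.erase D.root) + #(univ.erase D.root) := by
        rw [sum_add_distrib]
        gcongr
        exacts [D.sum_ncard_mrg_le, sum_ncard_adh_le hadh]
    _ = Nat.card V + (a + 1) * #(univ.erase D.root) := by ring

theorem ncard_edgeSet_bgraph_le [Finite V] [DecidableEq ι] (x : ι) :
    (D.bgraph x).edgeSet.ncard ≤
      (G.edgeSet ∩ (D.bag x).sym2).ncard + ∑ y : {y // D.IsChild y x}, (D.adh y).ncard := by
  refine (SimpleGraph.ncard_edgeSet_sum_le _ fun _ _ h => h).trans (add_le_add ?_ ?_)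
  · rw [← Set.ncard_image_of_injective _ (Sym2.map.injective Subtype.val_injective)]
    refine Set.ncard_le_ncard ?_ (Set.toFinite _)
    rintro _ ⟨⟨u, v⟩, huv, rfl⟩
    exact ⟨huv, u.2, v.2⟩
  · have hsub : {p : D.bag x × {y // D.IsChild y x} | (D.bgraph x).Adj (.inl p.1) (.inr p.2)} ⊆
        ⋃ y : {y // D.IsChild y x}, (Subtype.val ⁻¹' D.adh y) ×ˢ {y} := by
      rintro ⟨u, y⟩ ⟨w, hw, huw⟩
      exact Set.mem_iUnion.mpr ⟨y, mem_adh_of_adj_mem_comp y.2 u.2 hw huw, rfl⟩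
    calc _ ≤ _ := Set.ncard_le_ncard hsub (Set.toFinite _)
      _ ≤ ∑ y : {y // D.IsChild y x}, ((Subtype.val ⁻¹' D.adh y) ×ˢ {y}).ncard :=
        Set.ncard_iUnion_le_of_fintype _
      _ ≤ ∑ y : {y // D.IsChild y x}, (D.adh y).ncard := sum_le_sum fun y _ => by
        rw [Set.ncard_prod, Set.ncard_singleton, mul_one]
        exact Set.ncard_le_ncard_of_injOn _ (fun _ hu => hu) Subtype.val_injective.injOn

theorem sum_ncard_edgeSet_inter_sym2_bag_le [Finite V] [DecidableEq ι]
    (hadh : ∀ x, (D.adh x).ncard ≤ a) :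
    ∑ x, (G.edgeSet ∩ (D.bag x).sym2).ncard ≤ G.edgeSet.ncard + a ^ 2 * #(univ.erase D.root) :=
  calc ∑ x, (G.edgeSet ∩ (D.bag x).sym2).ncard
      ≤ ∑ x, (((G.edgeSet ∩ (D.bag x).sym2) \ (D.adh x).sym2).ncard + (D.adh x).sym2.ncard) :=
        sum_le_sum fun x _ => Set.ncard_le_ncard_sdiff_add_ncard _ _
    _ ≤ G.edgeSet.ncard + a ^ 2 * #(univ.erase D.root) := by
      rw [sum_add_distrib]
      refine add_le_add (Set.sum_ncard_le_ncard_of_pairwiseDisjoint (Set.toFinite _)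
        (fun x => Set.sdiff_subset.trans Set.inter_subset_left) ?_) ?_
      · refine D.pairwise_disjoint_sym2_bag_diff_sym2_adh.mono fun x y h => h.mono ?_ ?_ <;>
          exact Set.sdiff_subset_sdiff_left Set.inter_subset_right
      · refine sum_le_mul_card_erase (by simp [adh_root]) fun x => ?_
        exact (Set.ncard_sym2_le _).trans (Nat.pow_le_pow_left (hadh x) 2)

theorem sum_ncard_edgeSet_bgraph_le [Finite V] [DecidableEq ι]
    (hadh : ∀ x, (D.adh x).ncard ≤ a) :
    ∑ x, (D.bgraph x).edgeSet.ncard ≤ G.edgeSet.ncard + (a ^ 2 + a) * #(univ.erase D.root) :=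
  calc ∑ x, (D.bgraph x).edgeSet.ncard
      ≤ ∑ x, ((G.edgeSet ∩ (D.bag x).sym2).ncard +
          ∑ y : {y // D.IsChild y x}, (D.adh y).ncard) :=
        sum_le_sum fun x _ => ncard_edgeSet_bgraph_le x
    _ = ∑ x, (G.edgeSet ∩ (D.bag x).sym2).ncard + ∑ y ∈ univ.erase D.root, (D.adh y).ncard := by
        rw [sum_add_distrib, D.sum_sum_children fun y => (D.adh y).ncard]
    _ ≤ G.edgeSet.ncard + a ^ 2 * #(univ.erase D.root) + a * #(univ.erase D.root) :=
        add_le_add (sum_ncard_edgeSet_inter_sym2_bag_le hadh)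
          ((sum_le_univ_sum_of_nonneg fun _ => Nat.zero_le _).trans (sum_ncard_adh_le hadh))
    _ = G.edgeSet.ncard + (a ^ 2 + a) * #(univ.erase D.root) := by ring

end TreeDecomp

/-- For a regular rooted tree decomposition of adhesion at most `a`,
the total number of vertices of all bag graphs is at most `(a+2)·|V(G)|`, and the total
size (vertices plus edges) of all bag graphs is at most `(|V(G)|+|E(G)|) + (a+2)²·|V(G)|`. -/
theorem stmt3 {V ι : Type*} [Fintype V] [Fintype ι] {G : SimpleGraph V}
    (D : TreeDecomp G ι) (hreg : D.Regular)
    (a : ℕ) (hadh : ∀ x : ι, (D.adh x).ncard ≤ a) :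
    (∑ x : ι, Nat.card (↥(D.bag x) ⊕ {y : ι // D.toRTree.IsChild y x}))
        ≤ (a + 2) * Nat.card V ∧
    (∑ x : ι, (Nat.card (↥(D.bag x) ⊕ {y : ι // D.toRTree.IsChild y x})
          + (D.bgraph x).edgeSet.ncard))
        ≤ (Nat.card V + G.edgeSet.ncard) + (a + 2) ^ 2 * Nat.card V := by
  classical
  have hN := D.card_erase_root_le hreg
  have hvert := TreeDecomp.sum_card_bgraph_vertices_le hadh
  have hedge := TreeDecomp.sum_ncard_edgeSet_bgraph_le hadh
  constructor
  · nlinarith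
  · rw [sum_add_distrib]
    nlinarith
end

section
/- Let X be a finite set with |X| = s and let T be a finite rooted tree in which every edge between a node v and its child w is labeled by a function f_{vw}: X → X. Then there exist bijections c_v: X → {1,…,s}, one for each node v of T, such that for every edge between a node v and its child w and every x ∈ X, one has c_w(f_{vw}(x)) ≤ c_v(x). -/
/-- Step lemma: given a bijection `e : X ≃ Fin s` and any `f : X → X`, there is a
bijection `e'` with `e' (f x) ≤ e x` for all `x`. -/
lemma step_lemma {X : Type*} [Fintype X] {s : ℕ} (hs : Fintype.card X = s)
    (e : X ≃ Fin s) (f : X → X) :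
    ∃ e' : X ≃ Fin s, ∀ x, e' (f x) ≤ e x := by
  classical
  set A : Set X := Set.range f with hA
  have hfib : ∀ y : A, ((Finset.univ.filter (fun x => f x = (y : X))).image e).Nonempty := by
    rintro ⟨y, x, rfl⟩
    exact ⟨e x, Finset.mem_image_of_mem e (by simp)⟩
  set g : A → Fin s := fun y => Finset.min' _ (hfib y) with hgdef
  have hg_le : ∀ x : X, g ⟨f x, Set.mem_range_self x⟩ ≤ e x := fun x =>
    Finset.min'_le _ _ (Finset.mem_image_of_mem e (by simp))
  have hg_inv : ∀ y : A, f (e.symm (g y)) = (y : X) := by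
    intro y
    have h := Finset.min'_mem _ (hfib y)
    simp only [Finset.mem_image, Finset.mem_filter] at h
    obtain ⟨x, ⟨-, hx⟩, hex⟩ := h
    have hgy : g y = e x := hex.symm
    rw [hgy, Equiv.symm_apply_apply]; exact hx
  have hg_inj : Function.Injective g := by
    intro y1 y2 h
    ext
    rw [← hg_inv y1, ← hg_inv y2, h]
  have hcard : Fintype.card (↥Aᶜ) = Fintype.card (↥(Set.range g)ᶜ) := by
    have h1 : Fintype.card A = Fintype.card (Set.range g) :=
      Fintype.card_congr (Equiv.ofInjective g hg_inj)
    have h2 : Fintype.card (↥Aᶜ) = Fintype.card X - Fintype.card A :=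
      Fintype.card_compl_set A
    have h3 : Fintype.card (↥(Set.range g)ᶜ) = s - Fintype.card (Set.range g) := by
      have := Fintype.card_compl_set (Set.range g)
      simpa using this
    rw [h2, h3, hs, h1]
  let eC : ↥Aᶜ ≃ ↥(Set.range g)ᶜ := Fintype.equivOfCardEq hcard
  refine ⟨(Equiv.Set.sumCompl A).symm.trans
    ((Equiv.sumCongr (Equiv.ofInjective g hg_inj) eC).trans
      (Equiv.Set.sumCompl (Set.range g))), ?_⟩
  intro x
  have hmem : f x ∈ A := Set.mem_range_self x
  simp only [Equiv.trans_apply]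
  rw [Equiv.Set.sumCompl_symm_apply_of_mem hmem]
  simp only [Equiv.sumCongr_apply, Sum.map_inl, Equiv.Set.sumCompl_apply_inl]
  exact hg_le x

/-- Given a finite rooted tree whose edge from `parent w` to `w` is
labelled by a function `f w : X → X` (for `X` finite of size `s`), there are bijections
`c v : X ≃ Fin s`, one per node, such that colours never increase along edges:
`c w (f w x) ≤ c (parent w) x` for every non-root `w` and every `x`. -/
theorem stmt12 {ι X : Type*} [Fintype ι] [Fintype X] (s : ℕ) (hs : Fintype.card X = s)
    (T : RTree ι) (f : ι → X → X) :
    ∃ c : ι → (X ≃ Fin s),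
      ∀ w : ι, w ≠ T.root → ∀ x : X, c w (f w x) ≤ c (T.parent w) x := by
  classical
  have e₀ : X ≃ Fin s := (Fintype.equivFin X).trans (finCongr hs)
  choose step hstep using fun (e : X ≃ Fin s) (g : X → X) => step_lemma hs e g
  set d : ι → ℕ := fun w => Nat.find (T.reaches_root w) with hddef
  have hd : ∀ w, T.parent^[d w] w = T.root := fun w => Nat.find_spec (T.reaches_root w)
  have hdp : ∀ w, w ≠ T.root → d w = d (T.parent w) + 1 := by
    intro w hw
    have h0 : 0 < d w := by
      rcases Nat.eq_zero_or_pos (d w) with h | h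
      · exfalso
        apply hw
        have := hd w
        rwa [h, Function.iterate_zero_apply] at this
      · exact h
    have h1 : T.parent^[d w - 1] (T.parent w) = T.root := by
      have h2 := hd w
      rw [← Nat.succ_pred_eq_of_pos h0, Function.iterate_succ_apply] at h2
      exact h2
    have hle : d (T.parent w) ≤ d w - 1 := Nat.find_min' (T.reaches_root (T.parent w)) h1
    have hge : d w ≤ d (T.parent w) + 1 := by
      apply Nat.find_min' (T.reaches_root w)
      rw [Function.iterate_succ_apply]
      exact hd (T.parent w)
    omega
  set c' : ℕ → ι → (X ≃ Fin s) := fun n => Nat.rec (fun _ => e₀)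
    (fun n ih w => if w = T.root then e₀ else step (ih (T.parent w)) (f w)) n with hc'
  refine ⟨fun w => c' (d w) w, ?_⟩
  intro w hw x
  have h1 : d w = d (T.parent w) + 1 := hdp w hw
  have h2 : c' (d w) w = step (c' (d (T.parent w)) (T.parent w)) (f w) := by
    rw [h1]
    show (if w = T.root then e₀ else step (c' (d (T.parent w)) (T.parent w)) (f w)) = _
    rw [if_neg hw]
  simp only [h2]
  exact hstep _ _ x
end

section
/- Let G be a finite graph with a regular rooted tree decomposition (T,bag), let s,t ∈ V(G) and S ⊆ V(G), and set Ŝ = S ∪ {s,t}. Let z be a strict ancestor of y in T, assume Ŝ ∩ (comp(z) \ cone(y)) = ∅, and let Π_y be a semi-correct profile at y. Let J be the graph with vertex set D(y) ∪ adh(z) whose edge set is the union of Π_y and the edge set of torso(z,y), and let Π_z be the set of unordered pairs {a,b} of distinct elements of D(z) such that a and b are connected in J − S (the graph J with the vertices of S removed). Then Π_z is a semi-correct profile at z. -/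
/-- Adjacency in the torso of `X` in the induced subgraph `G[U]`:
`a, b ∈ X` are adjacent iff `G[U]` contains an `a`–`b` path whose internal vertices
all avoid `X`. -/
def TorsoAdj {V : Type*} (G : SimpleGraph V) (U X : Set V) (a b : V) : Prop :=
  a ≠ b ∧ a ∈ X ∧ b ∈ X ∧
    ∃ p : G.Walk a b, (∀ w ∈ p.support, w ∈ U) ∧
      (∀ w ∈ p.support, w ≠ a → w ≠ b → w ∉ X)

namespace TreeDecomp

variable {V ι : Type*} {G : SimpleGraph V} (D : TreeDecomp G ι)

/-- `D(x) = adh(x) ∪ ({s,t} ∩ cone(x))`. -/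
def Dset (s t : V) (x : ι) : Set V := D.adh x ∪ ({s, t} ∩ D.cone x)

end TreeDecomp

namespace TreeDecomp

variable {V ι : Type*} {G : SimpleGraph V} (D : TreeDecomp G ι)

/-- A semi-correct profile at `x` (with respect to `s`, `t` and the failed set `S`):
a set of unordered pairs of distinct elements of `D(x)` containing every pair connected
by an `S`-avoiding path in `G[cone(x)]`, all of whose pairs are connected by an
`S`-avoiding path in `G`. -/
def SemiCorrectProfile (s t : V) (S : Set V) (x : ι) (P : Set (Sym2 V)) : Prop :=
  (∀ a b : V, s(a, b) ∈ P → a ≠ b ∧ a ∈ D.Dset s t x ∧ b ∈ D.Dset s t x) ∧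
  (∀ a b : V, a ≠ b → a ∈ D.Dset s t x → b ∈ D.Dset s t x →
      ConnIn G (D.cone x \ S) a b → s(a, b) ∈ P) ∧
  (∀ a b : V, s(a, b) ∈ P → ConnIn G Sᶜ a b)

end TreeDecomp

/-!
Cut an `S`-avoiding walk in `G[cone z]` between two vertices of `V(J) = adh z ∪ D(y)` at its
visits to `V(J)`. The interior of each piece lies either in `comp y` or outside `cone y`, since
`adh y ⊆ V(J)` separates the two. In the first case the piece is an `S`-avoiding walk in
`G[cone y]` between vertices of `D(y)`, so its ends form a pair of `Π_y`; in the second its ends lie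
in `adh z ∪ adh y` and it is a torso path. Conversely, a `J`-edge is realised in `G - S` either by
semi-correctness of `Π_y` or by a torso path, whose interior lies in `comp z \ cone y` and so
avoids `S`.
-/

open SimpleGraph

namespace RTree

variable {ι : Type*} (T : RTree ι)

lemma iterate_parent_root (n : ℕ) : T.parent^[n] T.root = T.root :=
  Function.iterate_fixed T.parent_root n

lemma ne_root_of_anc_of_ne {z y : ι} (h : T.Anc z y) (hzy : z ≠ y) : y ≠ T.root := by
  rintro rfl
  obtain ⟨n, hn⟩ := h
  exact hzy (hn ▸ T.iterate_parent_root n)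

lemma not_anc_of_anc_of_ne {z y : ι} (h : T.Anc z y) (hzy : z ≠ y) : ¬ T.Anc y z := by
  rintro ⟨m, hm⟩
  obtain ⟨n, hn⟩ := h
  have hn0 : n ≠ 0 := by rintro rfl; exact hzy hn.symm
  have hper : Function.IsPeriodicPt T.parent (m + n) y := by
    rw [Function.IsPeriodicPt, Function.IsFixedPt, Function.iterate_add_apply, hn, hm]
  obtain ⟨N, hN⟩ := T.reaches_root y
  -- `y` lies on a cycle of the parent map, and every orbit ends at the fixed point `root`.
  have hy : y = T.root := by
    rw [← (hper.mul_const N).eq, show (m + n) * N = (m + n) * N - N + N by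
      have : N ≤ (m + n) * N := Nat.le_mul_of_pos_left N (by omega)
      omega, Function.iterate_add_apply, hN, T.iterate_parent_root]
  exact T.ne_root_of_anc_of_ne ⟨n, hn⟩ hzy hy

lemma eq_of_treeGraph_adj_of_anc_of_not_anc {y c e : ι} (hce : T.treeGraph.Adj c e)
    (hc : T.Anc y c) (he : ¬ T.Anc y e) : c = y ∧ T.parent y = e := by
  obtain ⟨n, hn⟩ := hc
  rcases hce.2 with ⟨-, hce⟩ | ⟨-, hec⟩
  · cases n with
    | zero => exact ⟨hn, hn ▸ hce⟩
    | succ k => exact absurd ⟨k, by rw [← hn, Function.iterate_succ_apply, hce]⟩ he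
  · exact absurd ⟨n + 1, by rw [Function.iterate_succ_apply, hec, hn]⟩ he

end RTree

namespace ConnIn

variable {V : Type*} {G J : SimpleGraph V} {U U' C : Set V} {a b c : V}

lemma left_mem (h : ConnIn G U a b) : a ∈ U :=
  h.elim fun p hp => hp a p.start_mem_support

lemma right_mem (h : ConnIn G U a b) : b ∈ U :=
  h.elim fun p hp => hp b p.end_mem_support

lemma refl (ha : a ∈ U) : ConnIn G U a a :=
  ⟨Walk.nil, by simpa using ha⟩

lemma of_adj (h : G.Adj a b) (ha : a ∈ U) (hb : b ∈ U) : ConnIn G U a b :=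
  ⟨Walk.cons h Walk.nil, by simp [ha, hb]⟩

lemma trans (hab : ConnIn G U a b) (hbc : ConnIn G U b c) : ConnIn G U a c := by
  obtain ⟨p, hp⟩ := hab
  obtain ⟨q, hq⟩ := hbc
  refine ⟨p.append q, fun w hw => ?_⟩
  rcases Walk.mem_support_append_iff p q |>.mp hw with hw | hw
  exacts [hp w hw, hq w hw]

lemma mono (h : ConnIn G U a b) (hU : U ⊆ U') : ConnIn G U' a b :=
  h.elim fun p hp => ⟨p, fun w hw => hU (hp w hw)⟩

lemma of_adj_of_adj {u w d : V} (hcu : G.Adj c u) (h : ConnIn G U u w) (hwd : G.Adj w d)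
    (hc : c ∈ U) (hd : d ∈ U) : ConnIn G U c d :=
  (of_adj hcu hc h.left_mem).trans (h.trans (of_adj hwd h.right_mem hd))

lemma inter_of_closed (hC : ∀ x ∈ C, ∀ v ∈ U, G.Adj x v → v ∈ C) (h : ConnIn G U a b)
    (ha : a ∈ C) : ConnIn G (U ∩ C) a b := by
  obtain ⟨p, hp⟩ := h
  induction p with
  | nil => exact refl ⟨hp _ (by simp), ha⟩
  | cons hadj q ih =>
    have hq : ∀ w ∈ q.support, w ∈ U := fun w hw => hp w (by simp [hw])
    have hv := hC _ ha _ (hq _ q.start_mem_support) hadj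
    exact (of_adj (U := U ∩ C) hadj ⟨hp _ (by simp), ha⟩ ⟨hq _ q.start_mem_support, hv⟩).trans
      (ih hv hq)

lemma of_forall_adj (hJG : ∀ a b, a ∈ U → b ∈ U → J.Adj a b → ConnIn G U a b)
    (h : ConnIn J U a b) : ConnIn G U a b := by
  obtain ⟨p, hp⟩ := h
  induction p with
  | nil => exact refl (hp _ (by simp))
  | cons hadj q ih =>
    have hq : ∀ w ∈ q.support, w ∈ U := fun w hw => hp w (by simp [hw])
    exact (hJG _ _ (hp _ (by simp)) (hq _ q.start_mem_support) hadj).trans (ih hq)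

lemma of_bridges {W Y : Set V} (hWU : W ⊆ U)
    (hedge : ∀ c ∈ Y, ∀ d ∈ Y, c ∈ W → d ∈ W → G.Adj c d → ConnIn J U c d)
    (hbridge : ∀ c ∈ Y, ∀ d ∈ Y, ∀ u w, c ∈ W → d ∈ W → G.Adj c u →
      ConnIn G (W \ Y) u w → G.Adj w d → ConnIn J U c d)
    (ha : a ∈ Y) (hb : b ∈ Y) (h : ConnIn G W a b) : ConnIn J U a b := by
  obtain ⟨p, hp⟩ := h
  -- Walk along `p`, remembering the last vertex `c` of `Y` met and the bridge begun after it.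
  suffices key : ∀ v (q : G.Walk v b), (∀ x ∈ q.support, x ∈ W) →
      (v ∈ Y ∧ ConnIn J U a v) ∨
      (∃ c ∈ Y, c ∈ W ∧ ConnIn J U a c ∧ ∃ u, G.Adj c u ∧ ConnIn G (W \ Y) u v) →
      ConnIn J U a b from
    key a p hp (Or.inl ⟨ha, refl (hWU (hp a p.start_mem_support))⟩)
  clear p hp
  intro v q
  induction q with
  | nil =>
    rintro - (⟨-, h⟩ | ⟨c, -, -, -, u, -, huv⟩)
    exacts [h, absurd hb huv.right_mem.2]
  | @cons v v' _ hadj q ih =>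
    intro hq hv
    have hvW : v ∈ W := hq v (by simp)
    have hv'W : v' ∈ W := hq v' (by simp)
    apply ih hb (fun x hx => hq x (by simp [hx]))
    by_cases hv'Y : v' ∈ Y
    · refine Or.inl ⟨hv'Y, ?_⟩
      rcases hv with ⟨hvY, hav⟩ | ⟨c, hcY, hcW, hac, u, hcu, huv⟩
      · exact hav.trans (hedge v hvY v' hv'Y hvW hv'W hadj)
      · exact hac.trans (hbridge c hcY v' hv'Y u v hcW hv'W hcu huv hadj)
    · refine Or.inr ?_
      rcases hv with ⟨hvY, hav⟩ | ⟨c, hcY, hcW, hac, u, hcu, huv⟩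
      · exact ⟨v, hvY, hvW, hav, v', hadj, refl ⟨hv'W, hv'Y⟩⟩
      · exact ⟨c, hcY, hcW, hac, u, hcu, huv.trans (of_adj hadj huv.right_mem ⟨hv'W, hv'Y⟩)⟩

end ConnIn

lemma torsoAdj_of_connIn {V : Type*} {G : SimpleGraph V} {U X : Set V} {a b : V} (hab : a ≠ b)
    (ha : a ∈ X) (hb : b ∈ X) (haU : a ∈ U) (hbU : b ∈ U)
    (h : ConnIn G (insert a (insert b (U \ X))) a b) : TorsoAdj G U X a b := by
  obtain ⟨p, hp⟩ := h
  refine ⟨hab, ha, hb, p, fun w hw => ?_, fun w hw hwa hwb => ?_⟩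
  · rcases hp w hw with rfl | rfl | hw
    exacts [haU, hbU, hw.1]
  · rcases hp w hw with rfl | rfl | hw
    exacts [absurd rfl hwa, absurd rfl hwb, hw.2]

lemma ConnIn.of_torsoAdj {V : Type*} {G J : SimpleGraph V} {U X U' : Set V} {a b : V}
    (hTJ : ∀ a b, TorsoAdj G U X a b → J.Adj a b) (ha : a ∈ X) (hb : b ∈ X) (haU : a ∈ U)
    (hbU : b ∈ U) (h : ConnIn G (insert a (insert b (U \ X))) a b) (ha' : a ∈ U') (hb' : b ∈ U') :
    ConnIn J U' a b := by
  obtain rfl | hab := eq_or_ne a b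
  · exact ConnIn.refl ha'
  · exact ConnIn.of_adj (hTJ a b (torsoAdj_of_connIn hab ha hb haU hbU h)) ha' hb'

lemma Sym2.exists_mk_eq_and_iff {α : Type*} {P : α → α → Prop} (hP : ∀ a b, P a b → P b a)
    {a b : α} : (∃ a' b', s(a, b) = s(a', b') ∧ P a' b') ↔ P a b := by
  refine ⟨fun ⟨a', b', he, h⟩ => ?_, fun h => ⟨a, b, rfl, h⟩⟩
  rcases Sym2.eq_iff.mp he with ⟨rfl, rfl⟩ | ⟨rfl, rfl⟩
  exacts [h, hP _ _ h]

namespace TreeDecomp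

variable {V ι : Type*} {G J : SimpleGraph V} (D : TreeDecomp G ι) {s t : V} {S : Set V}
  {z y : ι} {Py : Set (Sym2 V)} {a b c d : V}

lemma mem_adh_of_mem_bag_of_not_anc {y x₁ x₂ : ι} {u : V} (hy : y ≠ D.root)
    (h₁ : D.toRTree.Anc y x₁) (h₂ : ¬ D.toRTree.Anc y x₂)
    (hu₁ : u ∈ D.bag x₁) (hu₂ : u ∈ D.bag x₂) : u ∈ D.adh y := by
  obtain ⟨p⟩ := (D.bag_subtree u).preconnected ⟨x₁, hu₁⟩ ⟨x₂, hu₂⟩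
  -- The subtree of nodes whose bags contain `u` must use the edge from `y` to its parent.
  obtain ⟨d, -, hd₁, hd₂⟩ := p.exists_boundary_dart {c | D.toRTree.Anc y c.1} h₁ h₂
  obtain ⟨hc, he⟩ := D.toRTree.eq_of_treeGraph_adj_of_anc_of_not_anc d.adj hd₁ hd₂
  exact ⟨hy, he ▸ d.snd.2, hc ▸ d.fst.2⟩

lemma mem_cone_of_adj {y : ι} (hy : y ≠ D.root) {u v : V} (hu : u ∈ D.comp y)
    (huv : G.Adj u v) : v ∈ D.cone y := by
  obtain ⟨x, hux, hvx⟩ := D.bag_edge u v huv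
  by_cases hx : D.toRTree.Anc y x
  · exact ⟨x, hx, hvx⟩
  · obtain ⟨x₁, hx₁, hux₁⟩ := hu.1
    exact absurd (D.mem_adh_of_mem_bag_of_not_anc hy hx₁ hx hux₁ hux) hu.2

lemma adh_inter_cone_subset_adh {z y : ι} (hy : y ≠ D.root) (hyz : ¬ D.toRTree.Anc y z) :
    D.adh z ∩ D.cone y ⊆ D.adh y := by
  rintro v ⟨hvz, x, hx, hvx⟩
  exact D.mem_adh_of_mem_bag_of_not_anc hy hx hyz hvx hvz.2.2

lemma dset_subset_adh_union_dset (hst : Disjoint ({s, t} : Set V) (D.comp z \ D.cone y)) :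
    D.Dset s t z ⊆ D.adh z ∪ D.Dset s t y := by
  rintro v (hv | ⟨hvst, hvz⟩)
  · exact Or.inl hv
  by_cases hva : v ∈ D.adh z
  · exact Or.inl hva
  · refine Or.inr (Or.inr ⟨hvst, ?_⟩)
    by_contra hvy
    exact Set.disjoint_left.mp hst hvst ⟨⟨hvz, hva⟩, hvy⟩

lemma mem_dset_of_mem_cone (hy : y ≠ D.root) (hyz : ¬ D.toRTree.Anc y z)
    (hv : a ∈ D.adh z ∪ D.Dset s t y) (hvy : a ∈ D.cone y) : a ∈ D.Dset s t y :=
  hv.elim (fun h => Or.inl (D.adh_inter_cone_subset_adh hy hyz ⟨h, hvy⟩)) id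

lemma mem_adh_union_adh_of_not_mem_comp (hv : a ∈ D.adh z ∪ D.Dset s t y)
    (hvy : a ∉ D.comp y) : a ∈ D.adh z ∪ D.adh y := by
  rcases hv with hv | hv | ⟨-, hv⟩
  · exact Or.inl hv
  · exact Or.inr hv
  · by_contra h
    exact hvy ⟨hv, fun h' => h (Or.inr h')⟩

lemma adh_union_adh_subset_adh_union_dset : D.adh z ∪ D.adh y ⊆ D.adh z ∪ D.Dset s t y :=
  Set.union_subset_union_right _ Set.subset_union_left

lemma connIn_of_connIn_cone_diff (hPy : D.SemiCorrectProfile s t S y Py)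
    (hPJ : ∀ a b, a ≠ b → s(a, b) ∈ Py → J.Adj a b) (ha : a ∈ D.Dset s t y)
    (hb : b ∈ D.Dset s t y) (h : ConnIn G (D.cone y \ S) a b) : ConnIn J Sᶜ a b := by
  obtain rfl | hab := eq_or_ne a b
  · exact ConnIn.refl h.left_mem.2
  · exact ConnIn.of_adj (hPJ a b hab (hPy.2.1 a b hab ha hb h)) h.left_mem.2 h.right_mem.2

lemma connIn_of_adj_in_cone (hy : y ≠ D.root) (hyz : ¬ D.toRTree.Anc y z)
    (hPy : D.SemiCorrectProfile s t S y Py) (hPJ : ∀ a b, a ≠ b → s(a, b) ∈ Py → J.Adj a b)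
    (hTJ : ∀ a b, TorsoAdj G (D.cone z \ D.comp y) (D.adh z ∪ D.adh y) a b → J.Adj a b)
    (hc : c ∈ D.adh z ∪ D.Dset s t y) (hd : d ∈ D.adh z ∪ D.Dset s t y)
    (hcW : c ∈ D.cone z \ S) (hdW : d ∈ D.cone z \ S) (hcd : G.Adj c d) : ConnIn J Sᶜ c d := by
  by_cases hcomp : c ∈ D.comp y ∨ d ∈ D.comp y
  · obtain ⟨hcy, hdy⟩ : c ∈ D.cone y ∧ d ∈ D.cone y := hcomp.elim
      (fun h => ⟨h.1, D.mem_cone_of_adj hy h hcd⟩)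
      (fun h => ⟨D.mem_cone_of_adj hy h hcd.symm, h.1⟩)
    exact D.connIn_of_connIn_cone_diff hPy hPJ (D.mem_dset_of_mem_cone hy hyz hc hcy)
      (D.mem_dset_of_mem_cone hy hyz hd hdy) (ConnIn.of_adj hcd ⟨hcy, hcW.2⟩ ⟨hdy, hdW.2⟩)
  · rw [not_or] at hcomp
    exact ConnIn.of_torsoAdj hTJ (D.mem_adh_union_adh_of_not_mem_comp hc hcomp.1)
      (D.mem_adh_union_adh_of_not_mem_comp hd hcomp.2) ⟨hcW.1, hcomp.1⟩ ⟨hdW.1, hcomp.2⟩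
      (ConnIn.of_adj hcd (Set.mem_insert _ _) (Set.mem_insert_of_mem _ (Set.mem_insert _ _)))
      hcW.2 hdW.2

lemma connIn_of_bridge (hy : y ≠ D.root) (hyz : ¬ D.toRTree.Anc y z)
    (hPy : D.SemiCorrectProfile s t S y Py) (hPJ : ∀ a b, a ≠ b → s(a, b) ∈ Py → J.Adj a b)
    (hTJ : ∀ a b, TorsoAdj G (D.cone z \ D.comp y) (D.adh z ∪ D.adh y) a b → J.Adj a b)
    {u w : V} (hc : c ∈ D.adh z ∪ D.Dset s t y) (hd : d ∈ D.adh z ∪ D.Dset s t y)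
    (hcW : c ∈ D.cone z \ S) (hdW : d ∈ D.cone z \ S) (hcu : G.Adj c u)
    (huw : ConnIn G ((D.cone z \ S) \ (D.adh z ∪ D.Dset s t y)) u w) (hwd : G.Adj w d) :
    ConnIn J Sᶜ c d := by
  have not_adh : ∀ v ∈ (D.cone z \ S) \ (D.adh z ∪ D.Dset s t y), v ∉ D.adh y :=
    fun v hv h => hv.2 (Or.inr (Or.inl h))
  have hu := huw.left_mem
  by_cases huy : u ∈ D.cone y
  · have huw' := huw.inter_of_closed (C := D.comp y)
      (fun x hx v hv hxv => ⟨D.mem_cone_of_adj hy hx hxv, not_adh v hv⟩) ⟨huy, not_adh u hu⟩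
    have hcy : c ∈ D.cone y := D.mem_cone_of_adj hy ⟨huy, not_adh u hu⟩ hcu.symm
    have hdy : d ∈ D.cone y := D.mem_cone_of_adj hy huw'.right_mem.2 hwd
    refine D.connIn_of_connIn_cone_diff hPy hPJ (D.mem_dset_of_mem_cone hy hyz hc hcy)
      (D.mem_dset_of_mem_cone hy hyz hd hdy) ?_
    exact ConnIn.of_adj_of_adj hcu (huw'.mono fun v hv => ⟨hv.2.1, hv.1.1.2⟩) hwd
      ⟨hcy, hcW.2⟩ ⟨hdy, hdW.2⟩
  · have huw' := huw.inter_of_closed (C := (D.cone y)ᶜ)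
      (fun x hx v hv hxv hvy => hx (D.mem_cone_of_adj hy ⟨hvy, not_adh v hv⟩ hxv.symm)) huy
    have hcy : c ∉ D.comp y := fun h => huy (D.mem_cone_of_adj hy h hcu)
    have hdy : d ∉ D.comp y := fun h => huw'.right_mem.2 (D.mem_cone_of_adj hy h hwd.symm)
    have hmid : ((D.cone z \ S) \ (D.adh z ∪ D.Dset s t y)) ∩ (D.cone y)ᶜ ⊆
        insert c (insert d ((D.cone z \ D.comp y) \ (D.adh z ∪ D.adh y))) :=
      fun v hv => .inr (.inr ⟨⟨hv.1.1.1, fun h => hv.2 h.1⟩,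
        fun h => hv.1.2 (D.adh_union_adh_subset_adh_union_dset h)⟩)
    exact ConnIn.of_torsoAdj hTJ (D.mem_adh_union_adh_of_not_mem_comp hc hcy)
      (D.mem_adh_union_adh_of_not_mem_comp hd hdy) ⟨hcW.1, hcy⟩ ⟨hdW.1, hdy⟩
      (ConnIn.of_adj_of_adj hcu (huw'.mono hmid) hwd (Set.mem_insert _ _)
        (Set.mem_insert_of_mem _ (Set.mem_insert _ _))) hcW.2 hdW.2

lemma connIn_of_connIn_cone (hy : y ≠ D.root) (hyz : ¬ D.toRTree.Anc y z)
    (hPy : D.SemiCorrectProfile s t S y Py) (hPJ : ∀ a b, a ≠ b → s(a, b) ∈ Py → J.Adj a b)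
    (hTJ : ∀ a b, TorsoAdj G (D.cone z \ D.comp y) (D.adh z ∪ D.adh y) a b → J.Adj a b)
    (ha : a ∈ D.adh z ∪ D.Dset s t y) (hb : b ∈ D.adh z ∪ D.Dset s t y)
    (h : ConnIn G (D.cone z \ S) a b) : ConnIn J Sᶜ a b :=
  ConnIn.of_bridges (fun _ hv => hv.2)
    (fun _ hc _ hd hcW hdW hcd => D.connIn_of_adj_in_cone hy hyz hPy hPJ hTJ hc hd hcW hdW hcd)
    (fun _ hc _ hd _ _ hcW hdW hcu huw hwd =>
      D.connIn_of_bridge hy hyz hPy hPJ hTJ hc hd hcW hdW hcu huw hwd)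
    ha hb h

lemma connIn_compl_of_connIn (hPy : D.SemiCorrectProfile s t S y Py)
    (hJ : ∀ a b, J.Adj a b →
      s(a, b) ∈ Py ∨ TorsoAdj G (D.cone z \ D.comp y) (D.adh z ∪ D.adh y) a b)
    (hS : Disjoint S (D.comp z \ D.cone y)) (h : ConnIn J Sᶜ a b) : ConnIn G Sᶜ a b := by
  refine h.of_forall_adj fun a b ha hb hab => ?_
  rcases hJ a b hab with hP | ⟨-, -, -, p, hpU, hpX⟩
  · exact hPy.2.2 a b hP
  refine ⟨p, fun v hv => ?_⟩
  obtain rfl | hva := eq_or_ne v a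
  · exact ha
  obtain rfl | hvb := eq_or_ne v b
  · exact hb
  have hvX := hpX v hv hva hvb
  have hvy : v ∉ D.cone y := fun h => hvX (Or.inr (by_contra fun h' => (hpU v hv).2 ⟨h, h'⟩))
  exact Set.disjoint_right.mp hS ⟨⟨(hpU v hv).1, fun h => hvX (Or.inl h)⟩, hvy⟩

end TreeDecomp

theorem stmt14_general {V ι : Type*} {G : SimpleGraph V}
    (D : TreeDecomp G ι)
    (s t : V) (S : Set V)
    (z y : ι) (hanc : D.toRTree.Anc z y) (hzy : z ≠ y)
    (hdisj : Disjoint (S ∪ {s, t}) (D.comp z \ D.cone y))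
    (Py : Set (Sym2 V)) (hPy : D.SemiCorrectProfile s t S y Py)
    (J : SimpleGraph V)
    (hJ : ∀ a b : V, J.Adj a b ↔ a ≠ b ∧
        (s(a, b) ∈ Py ∨ TorsoAdj G (D.cone z \ D.comp y) (D.adh z ∪ D.adh y) a b)) :
    D.SemiCorrectProfile s t S z
      {e : Sym2 V | ∃ a b : V, e = s(a, b) ∧ a ≠ b ∧
        a ∈ D.Dset s t z ∧ b ∈ D.Dset s t z ∧ ConnIn J Sᶜ a b} := by
  have hy := D.toRTree.ne_root_of_anc_of_ne hanc hzy
  have hyz := D.toRTree.not_anc_of_anc_of_ne hanc hzy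
  have hmem {a b : V} := Sym2.exists_mk_eq_and_iff (a := a) (b := b)
    (P := fun a b => a ≠ b ∧ a ∈ D.Dset s t z ∧ b ∈ D.Dset s t z ∧ ConnIn J Sᶜ a b)
    fun a b ⟨hab, ha, hb, h⟩ => ⟨hab.symm, hb, ha, h.symm⟩
  refine ⟨fun a b h => (hmem.mp h).imp_right fun h => ⟨h.1, h.2.1⟩,
    fun a b hab ha hb h => hmem.mpr ⟨hab, ha, hb, ?_⟩,
    fun a b h => D.connIn_compl_of_connIn hPy (fun a b h => ((hJ a b).mp h).2)
      (hdisj.mono_left Set.subset_union_left) (hmem.mp h).2.2.2⟩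
  have hDz := D.dset_subset_adh_union_dset (hdisj.mono_left Set.subset_union_right)
  exact D.connIn_of_connIn_cone hy hyz hPy (fun a b hab h => (hJ a b).mpr ⟨hab, .inl h⟩)
    (fun a b h => (hJ a b).mpr ⟨h.1, .inr h⟩) (hDz ha) (hDz hb) h

/-- Let `z` be a strict ancestor of `y` with `Ŝ = S ∪ {s,t}` avoiding
`comp(z) \ cone(y)`, let `Π_y` be a semi-correct profile at `y`, and let `J` be the graph
on `D(y) ∪ adh(z)` whose edges are the pairs of `Π_y` together with the edges of
`torso(z,y)`. Then the set `Π_z` of pairs of distinct elements of `D(z)` connected in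
`J − S` is a semi-correct profile at `z`. -/
theorem stmt14 {V ι : Type*} [Fintype V] [Fintype ι] {G : SimpleGraph V}
    (D : TreeDecomp G ι) (hreg : D.Regular)
    (s t : V) (S : Set V)
    (z y : ι) (hanc : D.toRTree.Anc z y) (hzy : z ≠ y)
    (hdisj : Disjoint (S ∪ {s, t}) (D.comp z \ D.cone y))
    (Py : Set (Sym2 V)) (hPy : D.SemiCorrectProfile s t S y Py)
    (J : SimpleGraph V)
    (hJ : ∀ a b : V, J.Adj a b ↔ a ≠ b ∧
        (s(a, b) ∈ Py ∨ TorsoAdj G (D.cone z \ D.comp y) (D.adh z ∪ D.adh y) a b)) :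
    D.SemiCorrectProfile s t S z
      {e : Sym2 V | ∃ a b : V, e = s(a, b) ∧ a ≠ b ∧
        a ∈ D.Dset s t z ∧ b ∈ D.Dset s t z ∧ ConnIn J Sᶜ a b} :=
  stmt14_general D s t S z y hanc hzy hdisj Py hPy J hJ
end

section
/- Fix r ∈ ℕ. For all bi-interface graphs 𝔾 and ℍ of arity r, the abstraction operation commutes with composition: ⌈𝔾·ℍ⌉ = ⌈⌈𝔾⌉·⌈ℍ⌉⌉. Equivalently, the abstraction map is a semigroup homomorphism from bi-interface graphs of arity r under composition · to basic bi-interface graphs of arity r under the operation 𝔸 ⊙ 𝔹 := ⌈𝔸·𝔹⌉. -/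
/-- The three kinds of interface vertices of a basic bi-interface graph:
left-only, right-only, shared. -/
inductive Mark : Type
  | L | R | S
  deriving DecidableEq

/-- A bi-interface graph of arity `r` on the vertex type `α`: a graph together with two
partial maps `left, right : α ⇀ Fin r` (encoded via `Option`). A *valid* bi-interface
graph moreover has `left` and `right` injective and agreeing on common domain;
see `BIGraph.Valid`. -/
structure BIGraph (r : ℕ) (α : Type*) where
  graph : SimpleGraph α
  left : α → Option (Fin r)
  right : α → Option (Fin r)

namespace BIGraph

variable {r : ℕ} {α β : Type*}

/-- The interface maps are injective and agree on their common domain. -/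
def Valid (𝔾 : BIGraph r α) : Prop :=
  (∀ u v : α, ∀ i : Fin r, 𝔾.left u = some i → 𝔾.left v = some i → u = v) ∧
  (∀ u v : α, ∀ i : Fin r, 𝔾.right u = some i → 𝔾.right v = some i → u = v) ∧
  (∀ u : α, ∀ i j : Fin r, 𝔾.left u = some i → 𝔾.right u = some j → i = j)

/-- In the composition `𝔾·ℍ`, the vertex `u` of `𝔾` is identified with the vertex `v`
of `ℍ`. -/
def Ident (𝔾 : BIGraph r α) (ℍ : BIGraph r β) (u : α) (v : β) : Prop :=
  ∃ i : Fin r, 𝔾.right u = some i ∧ ℍ.left v = some i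

/-- The vertex `v` of `ℍ` gets identified with some vertex of `𝔾` in the composition. -/
def Merged (𝔾 : BIGraph r α) (ℍ : BIGraph r β) (v : β) : Prop :=
  ∃ u : α, Ident 𝔾 ℍ u v

/-- One-directional description of adjacency in the composition `𝔾·ℍ` (the actual
adjacency is its symmetrization). A merged vertex of `ℍ` is kept as an isolated,
interface-free vertex; all its edges are transferred to the corresponding vertex
of `𝔾`. -/
def compAdjAux (𝔾 : BIGraph r α) (ℍ : BIGraph r β) : α ⊕ β → α ⊕ β → Prop
  | Sum.inl u, Sum.inl u' =>
      𝔾.graph.Adj u u' ∨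
        ∃ v v' : β, ℍ.graph.Adj v v' ∧ Ident 𝔾 ℍ u v ∧ Ident 𝔾 ℍ u' v'
  | Sum.inl u, Sum.inr v' =>
      ¬ Merged 𝔾 ℍ v' ∧ ∃ v : β, ℍ.graph.Adj v v' ∧ Ident 𝔾 ℍ u v
  | Sum.inr v, Sum.inl u' =>
      ¬ Merged 𝔾 ℍ v ∧ ∃ v' : β, ℍ.graph.Adj v' v ∧ Ident 𝔾 ℍ u' v'
  | Sum.inr v, Sum.inr v' =>
      ¬ Merged 𝔾 ℍ v ∧ ¬ Merged 𝔾 ℍ v' ∧ ℍ.graph.Adj v v'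

open Classical in
/-- The composition `𝔾·ℍ` of two bi-interface graphs of arity `r`: obtained from the
disjoint union by identifying each `u ∈ dom(right_𝔾)` with the vertex `v ∈ dom(left_ℍ)`
carrying the same label, whenever such `v` exists; the left interface is that of `𝔾`
and the right interface is that of `ℍ` (transported through the identification). -/
noncomputable def comp (𝔾 : BIGraph r α) (ℍ : BIGraph r β) : BIGraph r (α ⊕ β) where
  graph :=
    { Adj := fun a b => a ≠ b ∧ (compAdjAux 𝔾 ℍ a b ∨ compAdjAux 𝔾 ℍ b a)
      symm := ⟨fun a b h => ⟨h.1.symm, h.2.symm⟩⟩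
      loopless := ⟨fun a h => h.1 rfl⟩ }
  left := fun a =>
    match a with
    | Sum.inl u => 𝔾.left u
    | Sum.inr _ => none
  right := fun a =>
    match a with
    | Sum.inl u =>
        if h : ∃ j : Fin r, ∃ v : β, Ident 𝔾 ℍ u v ∧ ℍ.right v = some j then some h.choose
        else none
    | Sum.inr v => if Merged 𝔾 ℍ v then none else ℍ.right v

/-- The renaming map `ι` of the abstraction operation, as a partial map: a vertex in the
domain of an interface map is sent to its label together with a mark recording which of
the interfaces it belongs to. -/
def iota (𝔾 : BIGraph r α) (u : α) : Option (Fin r × Mark) :=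
  match 𝔾.left u, 𝔾.right u with
  | some i, none => some (i, Mark.L)
  | none, some i => some (i, Mark.R)
  | some i, some _ => some (i, Mark.S)
  | none, none => none

open Classical in
/-- The abstraction `⌈𝔾⌉` of a bi-interface graph: a basic bi-interface graph on the
vertex type `Fin r × Mark`, where `ι(u)` and `ι(v)` are adjacent iff `𝔾` contains a
`u`–`v` path passing through no other interface vertex, and interfaces are inherited. -/
noncomputable def abstr (𝔾 : BIGraph r α) : BIGraph r (Fin r × Mark) where
  graph :=
    { Adj := fun p q => p ≠ q ∧ ∃ u v : α, 𝔾.iota u = some p ∧ 𝔾.iota v = some q ∧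
        ∃ w : 𝔾.graph.Walk u v, ∀ z ∈ w.support, z ≠ u → z ≠ v → 𝔾.iota z = none
      symm := by
        constructor
        rintro p q ⟨hpq, u, v, hu, hv, w, hw⟩
        refine ⟨hpq.symm, v, u, hv, hu, w.reverse, ?_⟩
        intro z hz hzv hzu
        rw [SimpleGraph.Walk.support_reverse, List.mem_reverse] at hz
        exact hw z hz hzu hzv
      loopless := ⟨fun p h => h.1 rfl⟩ }
  left := fun p =>
    if ∃ u : α, 𝔾.iota u = some p ∧ ∃ i : Fin r, 𝔾.left u = some i then some p.1 else none
  right := fun p =>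
    if ∃ u : α, 𝔾.iota u = some p ∧ ∃ i : Fin r, 𝔾.right u = some i then some p.1 else none

end BIGraph

/-!
Call a vertex of `𝔾·ℍ` kept if it is an interface vertex of `𝔾` or of `ℍ`. Sending kept vertices
to their `ι`-images identifies them with the relevant vertices of `⌈𝔾⌉·⌈ℍ⌉`, interface maps
included, and two kept vertices are adjacent in `⌈𝔾⌉·⌈ℍ⌉` exactly when `𝔾·ℍ` joins them by a path
whose inner vertices are not kept. Indeed such a path cannot cross from `𝔾` to `ℍ`, since the two
sides share only glued vertices, which are kept; so it is a path of `𝔾` or of `ℍ` avoiding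
interface vertices, i.e. an edge of `⌈𝔾⌉` or of `⌈ℍ⌉`. Hence `⌈𝔾⌉·⌈ℍ⌉` is the abstraction of `𝔾·ℍ`
to the kept vertices, and abstraction is transitive: a path through non-interface vertices is cut,
at the kept vertices it meets, into segments that are edges of the intermediate graph, and
conversely.
-/

namespace SimpleGraph

variable {V W : Type*} {G : SimpleGraph V} {P : V → Prop} {u v w : V}

variable (G) in
def ReachableThrough (P : V → Prop) (u v : V) : Prop :=
  ∃ p : G.Walk u v, ∀ t ∈ p.support, t ≠ u → t ≠ v → P t

theorem ReachableThrough.refl (P : V → Prop) (u : V) : G.ReachableThrough P u u :=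
  ⟨.nil, fun _ ht h _ => absurd (List.mem_singleton.1 ht) h⟩

theorem Adj.reachableThrough (h : G.Adj u v) : G.ReachableThrough P u v :=
  ⟨h.toWalk, fun t ht htu htv => by simp_all⟩

theorem ReachableThrough.mono {Q : V → Prop} (hPQ : ∀ t, P t → Q t)
    (h : G.ReachableThrough P u v) : G.ReachableThrough Q u v :=
  let ⟨p, hp⟩ := h
  ⟨p, fun t ht htu htv => hPQ t (hp t ht htu htv)⟩

theorem ReachableThrough.trans (h₁ : G.ReachableThrough P u w) (h₂ : G.ReachableThrough P w v)
    (hw : w ≠ v → P w) : G.ReachableThrough P u v := by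
  by_cases hwv : w = v
  · exact hwv ▸ h₁
  obtain ⟨p₁, hp₁⟩ := h₁
  obtain ⟨p₂, hp₂⟩ := h₂
  refine ⟨p₁.append p₂, fun t ht htu htv => ?_⟩
  by_cases htw : t = w
  · exact htw ▸ hw hwv
  rcases (Walk.mem_support_append_iff p₁ p₂).1 ht with ht | ht
  · exact hp₁ t ht htu htw
  · exact hp₂ t ht htw htv

theorem ReachableThrough.map {G' : SimpleGraph W} {P' : W → Prop} (φ : G →g G')
    (hφ : ∀ t, P t → P' (φ t)) (h : G.ReachableThrough P u v) :
    G'.ReachableThrough P' (φ u) (φ v) := by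
  obtain ⟨p, hp⟩ := h
  refine ⟨p.map φ, fun s hs hsu hsv => ?_⟩
  obtain ⟨t, ht, rfl⟩ := List.mem_map.1 (p.support_map φ ▸ hs)
  exact hφ t (hp t ht (ne_of_apply_ne φ hsu) (ne_of_apply_ne φ hsv))

theorem ReachableThrough.head_induction_on {R : V → Prop} (h : G.ReachableThrough P u v)
    (nil : R v) (cons : ∀ {u w}, G.Adj u w → R w → (w ≠ v → P w) → R u) : R u := by
  classical
  obtain ⟨p, hp⟩ := h
  suffices key : ∀ {u} (q : G.Walk u v), (∀ t ∈ q.support.tail, t ≠ v → P t) → R u by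
    -- on the path `p.bypass` the start `u` does not occur again
    refine key p.bypass fun t ht htv => hp t (p.support_bypass_subset_support
      (List.mem_of_mem_tail ht)) ?_ htv
    rintro rfl
    have := p.bypass_isPath.support_nodup
    rw [← Walk.cons_tail_support, List.nodup_cons] at this
    exact this.1 ht
  clear hp p
  intro u q hq
  induction q with
  | nil => exact nil
  | cons hadj q ih =>
    exact cons hadj (ih nil @cons fun t ht => hq t (List.mem_of_mem_tail ht))
      (hq _ q.start_mem_support)

/-- Up to the relabelling `f`, `G'` is the graph on the domain of `f` in which two vertices are
adjacent when `G` joins them through vertices outside that domain. -/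
structure IsAbstraction (f : V → Option W) (G : SimpleGraph V) (G' : SimpleGraph W) : Prop where
  injective : ∀ {a a' x}, f a = some x → f a' = some x → a = a'
  exists_of_adj : ∀ {x z}, G'.Adj x z → ∃ c, f c = some z
  adj_iff : ∀ {a c x z}, f a = some x → f c = some z →
    (G'.Adj x z ↔ a ≠ c ∧ G.ReachableThrough (f · = none) a c)

theorem IsAbstraction.reachableThrough_iff {f : V → Option W} {G' : SimpleGraph W}
    {P' : W → Prop} (hf : IsAbstraction f G G') (hP : ∀ {a x}, f a = some x → (P' x ↔ P a))
    (hnone : ∀ {a}, f a = none → P a) {a b : V} {x y : W} (ha : f a = some x)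
    (hb : f b = some y) : G'.ReachableThrough P' x y ↔ G.ReachableThrough P a b := by
  constructor
  · intro h
    refine h.head_induction_on (R := fun x => ∀ {a}, f a = some x → G.ReachableThrough P a b)
      (fun ha => by rw [hf.injective ha hb]; exact .refl P b) ?_ ha
    intro x z hxz ih hz a ha
    obtain ⟨c, hc⟩ := hf.exists_of_adj hxz
    have hac := ((hf.adj_iff ha hc).1 hxz).2.mono fun t => hnone
    refine hac.trans (ih hc) fun hcb => (hP hc).1 (hz ?_)
    rintro rfl
    exact hcb (hf.injective hc hb)
  · intro h
    -- `a` is the last kept vertex met so far and `c` is reached from it through unkept ones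
    refine h.head_induction_on (R := fun c => ∀ {a x}, f a = some x →
        (a = c ∨ f c = none ∧ G.ReachableThrough (f · = none) a c) → G'.ReachableThrough P' x y)
      ?_ ?_ ha (Or.inl rfl)
    · rintro a x ha (rfl | ⟨hb', -⟩)
      · exact (Option.some.inj (ha.symm.trans hb)) ▸ .refl P' x
      · simp [hb'] at hb
    intro c d hcd ih hd a x ha hpend
    have had : G.ReachableThrough (f · = none) a d := by
      rcases hpend with rfl | ⟨hc, hac⟩
      · exact hcd.reachableThrough
      · exact hac.trans hcd.reachableThrough fun _ => hc
    cases hfd : f d with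
    | none => exact ih ha (Or.inr ⟨hfd, had⟩)
    | some z =>
      have hzy := ih hfd (Or.inl rfl)
      by_cases had' : a = d
      · subst had'
        exact (Option.some.inj (ha.symm.trans hfd)) ▸ hzy
      refine ((hf.adj_iff ha hfd).2 ⟨had', had⟩).reachableThrough.trans hzy fun hzy' => ?_
      refine (hP hfd).2 (hd ?_)
      rintro rfl
      exact hzy' (Option.some.inj (hfd.symm.trans hb))

end SimpleGraph

namespace BIGraph

open SimpleGraph

variable {r : ℕ} {α β : Type*} {𝔾 : BIGraph r α} {ℍ : BIGraph r β}

theorem iota_eq_none_iff {u : α} : 𝔾.iota u = none ↔ 𝔾.left u = none ∧ 𝔾.right u = none := by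
  cases hl : 𝔾.left u <;> cases hr : 𝔾.right u <;> simp [iota, hl, hr]

theorem iota_ne_none_of {Φ : Option (Fin r) → Option (Fin r) → Prop} (hΦ : ¬Φ none none)
    {u : α} (h : Φ (𝔾.left u) (𝔾.right u)) : 𝔾.iota u ≠ none := fun hu => by
  rw [(iota_eq_none_iff.1 hu).1, (iota_eq_none_iff.1 hu).2] at h
  exact hΦ h

theorem iota_congr {u : α} {x : β} (hl : 𝔾.left u = ℍ.left x) (hr : 𝔾.right u = ℍ.right x) :
    𝔾.iota u = ℍ.iota x := by
  simp only [iota, hl, hr]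

theorem left_of_iota {u : α} {p : Fin r × Mark} (h : 𝔾.iota u = some p) :
    𝔾.left u = if p.2 = Mark.R then none else some p.1 := by
  cases hl : 𝔾.left u <;> cases hr : 𝔾.right u <;> simp [iota, hl, hr] at h <;> simp [← h]

theorem right_eq_none_of_iota {u : α} {p : Fin r × Mark} (h : 𝔾.iota u = some p) :
    𝔾.right u = none ↔ p.2 = Mark.L := by
  cases hl : 𝔾.left u <;> cases hr : 𝔾.right u <;> simp [iota, hl, hr] at h <;> simp [← h]

theorem right_of_iota (h𝔾 : 𝔾.Valid) {u : α} {p : Fin r × Mark} (h : 𝔾.iota u = some p) :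
    𝔾.right u = if p.2 = Mark.L then none else some p.1 := by
  cases hl : 𝔾.left u <;> cases hr : 𝔾.right u <;> simp [iota, hl, hr] at h <;>
    simp [← h]
  exact (h𝔾.2.2 u _ _ hl hr).symm

theorem iota_inj (h𝔾 : 𝔾.Valid) {u u' : α} {p : Fin r × Mark} (hu : 𝔾.iota u = some p)
    (hu' : 𝔾.iota u' = some p) : u = u' := by
  by_cases hR : p.2 = Mark.R
  · have hL : p.2 ≠ Mark.L := by simp [hR]
    exact h𝔾.2.1 u u' p.1 (by simp [right_of_iota h𝔾 hu, hL])
      (by simp [right_of_iota h𝔾 hu', hL])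
  · exact h𝔾.1 u u' p.1 (by simp [left_of_iota hu, hR]) (by simp [left_of_iota hu', hR])

open Classical in
theorem abstr_left_eq (p : Fin r × Mark) :
    𝔾.abstr.left p = if (∃ u, 𝔾.iota u = some p) ∧ p.2 ≠ Mark.R then some p.1 else none := by
  refine if_congr ⟨fun ⟨u, hu, i, hi⟩ => ⟨⟨u, hu⟩, ?_⟩, fun ⟨⟨u, hu⟩, hR⟩ => ⟨u, hu, ?_⟩⟩ rfl rfl
  · rw [left_of_iota hu] at hi
    split_ifs at hi with hR
    exact hR
  · simp [left_of_iota hu, hR]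

open Classical in
theorem abstr_right_eq (p : Fin r × Mark) :
    𝔾.abstr.right p = if (∃ u, 𝔾.iota u = some p) ∧ p.2 ≠ Mark.L then some p.1 else none := by
  refine if_congr ⟨fun ⟨u, hu, i, hi⟩ => ⟨⟨u, hu⟩, ?_⟩, fun ⟨⟨u, hu⟩, hL⟩ => ⟨u, hu, ?_⟩⟩ rfl rfl
  · rw [Ne, ← right_eq_none_of_iota hu, hi]
    simp
  · rwa [← Option.ne_none_iff_exists', Ne, right_eq_none_of_iota hu]

theorem abstr_left_of_iota {u : α} {p : Fin r × Mark} (hu : 𝔾.iota u = some p) :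
    𝔾.abstr.left p = 𝔾.left u := by
  rw [abstr_left_eq, left_of_iota hu]
  by_cases hR : p.2 = Mark.R <;> simp [hR, show ∃ u, 𝔾.iota u = some p from ⟨u, hu⟩]

theorem abstr_right_of_iota (h𝔾 : 𝔾.Valid) {u : α} {p : Fin r × Mark}
    (hu : 𝔾.iota u = some p) : 𝔾.abstr.right p = 𝔾.right u := by
  rw [abstr_right_eq, right_of_iota h𝔾 hu]
  by_cases hL : p.2 = Mark.L <;> simp [hL, show ∃ u, 𝔾.iota u = some p from ⟨u, hu⟩]

theorem exists_iota_of_abstr {p : Fin r × Mark} (h : 𝔾.abstr.iota p ≠ none) :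
    ∃ u, 𝔾.iota u = some p := by
  rw [Ne, iota_eq_none_iff, abstr_left_eq, abstr_right_eq] at h
  split_ifs at h with h₁ h₂ h₂ <;> first | exact h₁.1 | exact h₂.1 | simp at h

theorem exists_abstr_iff (h𝔾 : 𝔾.Valid) {Φ : Option (Fin r) → Option (Fin r) → Prop}
    (hΦ : ¬Φ none none) :
    (∃ p, Φ (𝔾.abstr.left p) (𝔾.abstr.right p)) ↔ ∃ u, Φ (𝔾.left u) (𝔾.right u) := by
  constructor
  · rintro ⟨p, hp⟩
    obtain ⟨u, hu⟩ := exists_iota_of_abstr (iota_ne_none_of hΦ hp)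
    rw [abstr_left_of_iota hu, abstr_right_of_iota h𝔾 hu] at hp
    exact ⟨u, hp⟩
  · rintro ⟨u, hu⟩
    obtain ⟨p, hp⟩ := Option.ne_none_iff_exists'.1 (iota_ne_none_of hΦ hu)
    exact ⟨p, by rwa [abstr_left_of_iota hp, abstr_right_of_iota h𝔾 hp]⟩

theorem Valid.abstr (h𝔾 : 𝔾.Valid) : 𝔾.abstr.Valid := by
  have of_left {p i} (h : 𝔾.abstr.left p = some i) : ∃ u, 𝔾.iota u = some p :=
    exists_iota_of_abstr (iota_ne_none_of (Φ := fun l _ => l = some i) (by simp) h)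
  have of_right {p i} (h : 𝔾.abstr.right p = some i) : ∃ u, 𝔾.iota u = some p :=
    exists_iota_of_abstr (iota_ne_none_of (Φ := fun _ o => o = some i) (by simp) h)
  refine ⟨fun p p' i hp hp' => ?_, fun p p' i hp hp' => ?_, fun p i j hi hj => ?_⟩
  · obtain ⟨u, hu⟩ := of_left hp
    obtain ⟨u', hu'⟩ := of_left hp'
    rw [abstr_left_of_iota hu] at hp
    rw [abstr_left_of_iota hu'] at hp'
    rw [h𝔾.1 u u' i hp hp', hu'] at hu
    exact Option.some.inj hu.symm
  · obtain ⟨u, hu⟩ := of_right hp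
    obtain ⟨u', hu'⟩ := of_right hp'
    rw [abstr_right_of_iota h𝔾 hu] at hp
    rw [abstr_right_of_iota h𝔾 hu'] at hp'
    rw [h𝔾.2.1 u u' i hp hp', hu'] at hu
    exact Option.some.inj hu.symm
  · obtain ⟨u, hu⟩ := of_left hi
    rw [abstr_left_of_iota hu] at hi
    rw [abstr_right_of_iota h𝔾 hu] at hj
    exact h𝔾.2.2 u i j hi hj

theorem ext {𝔸 𝔹 : BIGraph r α} (hg : 𝔸.graph = 𝔹.graph) (hl : 𝔸.left = 𝔹.left)
    (hr : 𝔸.right = 𝔹.right) : 𝔸 = 𝔹 := by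
  cases 𝔸
  cases 𝔹
  congr

theorem abstr_eq_of_isAbstraction {𝔾' : BIGraph r β} {f : α → Option β}
    (hf : IsAbstraction f 𝔾.graph 𝔾'.graph) (hiota : ∀ {a x}, f a = some x → 𝔾'.iota x = 𝔾.iota a)
    (hnone : ∀ {a}, f a = none → 𝔾.iota a = none)
    (hsurj : ∀ {x}, 𝔾'.iota x ≠ none → ∃ a, f a = some x) : 𝔾.abstr = 𝔾'.abstr := by
  classical
  have hsome {a p} (ha : 𝔾.iota a = some p) : ∃ x, f a = some x ∧ 𝔾'.iota x = some p := by
    cases hfa : f a with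
    | none => simp [hnone hfa] at ha
    | some x => exact ⟨x, rfl, (hiota hfa).trans ha⟩
  have hback {x p} (hx : 𝔾'.iota x = some p) : ∃ a, f a = some x ∧ 𝔾.iota a = some p := by
    obtain ⟨a, ha⟩ := hsurj (x := x) (by simp [hx])
    exact ⟨a, ha, (hiota ha).symm.trans hx⟩
  have hrange (p) : (∃ a, 𝔾.iota a = some p) ↔ ∃ x, 𝔾'.iota x = some p :=
    ⟨fun ⟨_, ha⟩ => (hsome ha).imp fun _ => And.right,
      fun ⟨_, hx⟩ => (hback hx).imp fun _ => And.right⟩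
  have hreach {a b x y} (ha : f a = some x) (hb : f b = some y) :=
    hf.reachableThrough_iff (P := (𝔾.iota · = none)) (P' := (𝔾'.iota · = none))
      (fun h => by rw [hiota h]) hnone ha hb
  refine ext (SimpleGraph.ext ?_) (funext fun p => ?_) (funext fun p => ?_)
  · ext p q
    refine and_congr_right fun _ => ⟨?_, ?_⟩
    · rintro ⟨a, b, ha, hb, hab⟩
      obtain ⟨x, hx, hx'⟩ := hsome ha
      obtain ⟨y, hy, hy'⟩ := hsome hb
      exact ⟨x, y, hx', hy', (hreach hx hy).2 hab⟩
    · rintro ⟨x, y, hx, hy, hxy⟩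
      obtain ⟨a, ha, ha'⟩ := hback hx
      obtain ⟨b, hb, hb'⟩ := hback hy
      exact ⟨a, b, ha', hb', (hreach ha hb).1 hxy⟩
  · rw [abstr_left_eq, abstr_left_eq]
    exact if_congr (and_congr_left' (hrange p)) rfl rfl
  · rw [abstr_right_eq, abstr_right_eq]
    exact if_congr (and_congr_left' (hrange p)) rfl rfl

theorem ident_left_unique (h𝔾 : 𝔾.Valid) {u u' : α} {v : β} (h : Ident 𝔾 ℍ u v)
    (h' : Ident 𝔾 ℍ u' v) : u = u' := by
  obtain ⟨i, hu, hv⟩ := h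
  obtain ⟨j, hu', hv'⟩ := h'
  cases hv.symm.trans hv'
  exact h𝔾.2.1 u u' i hu hu'

theorem ident_right_unique (hℍ : ℍ.Valid) {u : α} {v v' : β} (h : Ident 𝔾 ℍ u v)
    (h' : Ident 𝔾 ℍ u v') : v = v' := by
  obtain ⟨i, hu, hv⟩ := h
  obtain ⟨j, hu', hv'⟩ := h'
  cases hu.symm.trans hu'
  exact hℍ.1 v v' i hv hv'

open Classical in
noncomputable def compInr (𝔾 : BIGraph r α) (ℍ : BIGraph r β) (v : β) : α ⊕ β :=
  if h : Merged 𝔾 ℍ v then Sum.inl (Classical.choose h) else Sum.inr v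

theorem compInr_of_not_merged {v : β} (h : ¬Merged 𝔾 ℍ v) : compInr 𝔾 ℍ v = Sum.inr v :=
  dif_neg h

theorem ident_of_compInr_eq_inl {u : α} {v : β} (h : compInr 𝔾 ℍ v = Sum.inl u) :
    Ident 𝔾 ℍ u v := by
  unfold compInr at h
  split_ifs at h with hv
  exact Sum.inl.inj h ▸ Classical.choose_spec hv

theorem compInr_eq_inl_iff (h𝔾 : 𝔾.Valid) {u : α} {v : β} :
    compInr 𝔾 ℍ v = Sum.inl u ↔ Ident 𝔾 ℍ u v := by
  refine ⟨ident_of_compInr_eq_inl, fun huv => ?_⟩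
  have hm : Merged 𝔾 ℍ v := ⟨u, huv⟩
  rw [compInr, dif_pos hm, Sum.inl.injEq]
  exact ident_left_unique h𝔾 (Classical.choose_spec hm) huv

theorem compInr_injective (h𝔾 : 𝔾.Valid) (hℍ : ℍ.Valid) : Function.Injective (compInr 𝔾 ℍ) := by
  intro v v' h
  by_cases hm : Merged 𝔾 ℍ v
  · obtain ⟨u, huv⟩ := hm
    exact ident_right_unique hℍ huv
      (ident_of_compInr_eq_inl (h ▸ (compInr_eq_inl_iff h𝔾).2 huv))
  · rw [compInr_of_not_merged hm] at h
    unfold compInr at h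
    split_ifs at h
    exact Sum.inr.inj h

def inlHom (𝔾 : BIGraph r α) (ℍ : BIGraph r β) : 𝔾.graph →g (𝔾.comp ℍ).graph where
  toFun := Sum.inl
  map_rel' h := ⟨by simpa using h.ne, Or.inl (Or.inl h)⟩

noncomputable def compInrHom (hℍ : ℍ.Valid) : ℍ.graph →g (𝔾.comp ℍ).graph where
  toFun := compInr 𝔾 ℍ
  map_rel' {v v'} h := by
    unfold compInr
    by_cases hv : Merged 𝔾 ℍ v <;> by_cases hv' : Merged 𝔾 ℍ v'
    · rw [dif_pos hv, dif_pos hv']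
      refine ⟨fun he => h.ne ?_, Or.inl (Or.inr ⟨v, v', h, Classical.choose_spec hv,
        Classical.choose_spec hv'⟩)⟩
      have hv₁ := Classical.choose_spec hv
      rw [Sum.inl.inj he] at hv₁
      exact ident_right_unique hℍ hv₁ (Classical.choose_spec hv')
    · rw [dif_pos hv, dif_neg hv']
      exact ⟨Sum.inl_ne_inr, Or.inl ⟨hv', v, h, Classical.choose_spec hv⟩⟩
    · rw [dif_neg hv, dif_pos hv']
      exact ⟨Sum.inr_ne_inl, Or.inl ⟨hv, v', h.symm, Classical.choose_spec hv'⟩⟩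
    · rw [dif_neg hv, dif_neg hv']
      exact ⟨by simpa using h.ne, Or.inl ⟨hv, hv', h⟩⟩

theorem comp_adj_iff (h𝔾 : 𝔾.Valid) (hℍ : ℍ.Valid) {a c : α ⊕ β} :
    (𝔾.comp ℍ).graph.Adj a c ↔ Relation.Map 𝔾.graph.Adj Sum.inl Sum.inl a c ∨
      Relation.Map ℍ.graph.Adj (compInr 𝔾 ℍ) (compInr 𝔾 ℍ) a c := by
  refine ⟨fun h => ?_, ?_⟩
  · have key : ∀ a c, compAdjAux 𝔾 ℍ a c → Relation.Map 𝔾.graph.Adj Sum.inl Sum.inl a c ∨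
        Relation.Map ℍ.graph.Adj (compInr 𝔾 ℍ) (compInr 𝔾 ℍ) a c := by
      have inl_eq {u v} (h : Ident 𝔾 ℍ u v) := ((compInr_eq_inl_iff h𝔾).2 h).symm
      rintro (u | v) (u' | v') h <;> simp only [compAdjAux] at h
      · rcases h with h | ⟨v, v', h, hu, hu'⟩
        · exact Or.inl ⟨u, u', h, rfl, rfl⟩
        · exact Or.inr ⟨v, v', h, (inl_eq hu).symm, (inl_eq hu').symm⟩
      · obtain ⟨hv', v, h, hu⟩ := h
        exact Or.inr ⟨v, v', h, (inl_eq hu).symm, compInr_of_not_merged hv'⟩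
      · obtain ⟨hv, v', h, hu'⟩ := h
        exact Or.inr ⟨v, v', h.symm, compInr_of_not_merged hv, (inl_eq hu').symm⟩
      · exact Or.inr ⟨v, v', h.2.2, compInr_of_not_merged h.1, compInr_of_not_merged h.2.1⟩
    rcases h.2 with h | h
    · exact key a c h
    · rcases key c a h with ⟨u, u', hadj, rfl, rfl⟩ | ⟨v, v', hadj, rfl, rfl⟩
      · exact Or.inl ⟨u', u, hadj.symm, rfl, rfl⟩
      · exact Or.inr ⟨v', v, hadj.symm, rfl, rfl⟩
  · rintro (⟨u, u', h, rfl, rfl⟩ | ⟨v, v', h, rfl, rfl⟩)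
    · exact (inlHom 𝔾 ℍ).map_adj h
    · exact (compInrHom hℍ).map_adj h

open Classical in
theorem comp_right_inl (hℍ : ℍ.Valid) (u : α) :
    (𝔾.comp ℍ).right (Sum.inl u) =
      if ∃ v, Ident 𝔾 ℍ u v ∧ ℍ.right v ≠ none then 𝔾.right u else none := by
  change dite _ _ _ = _
  by_cases h : ∃ j v, Ident 𝔾 ℍ u v ∧ ℍ.right v = some j
  · obtain ⟨v, ⟨i, hu, hv⟩, hv'⟩ := Classical.choose_spec h
    rw [dif_pos h, if_pos ⟨v, ⟨i, hu, hv⟩, by simp [hv']⟩, hu, hℍ.2.2 v i _ hv hv']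
  · rw [dif_neg h, if_neg]
    rintro ⟨v, huv, hv⟩
    obtain ⟨j, hj⟩ := Option.ne_none_iff_exists'.1 hv
    exact h ⟨j, v, huv, hj⟩

open Classical in
theorem comp_right_inr (v : β) :
    (𝔾.comp ℍ).right (Sum.inr v) = if Merged 𝔾 ℍ v then none else ℍ.right v :=
  rfl

theorem comp_iota_inl_eq_none (hℍ : ℍ.Valid) {u : α} (h : 𝔾.iota u = none) :
    (𝔾.comp ℍ).iota (Sum.inl u) = none := by
  rw [iota_eq_none_iff] at h ⊢
  refine ⟨h.1, ?_⟩
  rw [comp_right_inl hℍ, h.2, ite_self]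

theorem comp_iota_inr_eq_none {v : β} (h : ℍ.iota v = none) :
    (𝔾.comp ℍ).iota (Sum.inr v) = none := by
  rw [iota_eq_none_iff] at h ⊢
  refine ⟨rfl, ?_⟩
  rw [comp_right_inr, h.2, ite_self]

theorem ident_abstr_iff (h𝔾 : 𝔾.Valid) {u : α} {v : β} {p q : Fin r × Mark}
    (hu : 𝔾.iota u = some p) (hv : ℍ.iota v = some q) :
    Ident 𝔾.abstr ℍ.abstr p q ↔ Ident 𝔾 ℍ u v := by
  simp only [Ident, abstr_right_of_iota h𝔾 hu, abstr_left_of_iota hv]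

theorem merged_abstr_iff (h𝔾 : 𝔾.Valid) {v : β} {q : Fin r × Mark} (hv : ℍ.iota v = some q) :
    Merged 𝔾.abstr ℍ.abstr q ↔ Merged 𝔾 ℍ v := by
  simp only [Merged, Ident, abstr_left_of_iota hv]
  exact exists_abstr_iff h𝔾 (Φ := fun _ o => ∃ i, o = some i ∧ ℍ.left v = some i) (by simp)

theorem comp_abstr_iota_inl (h𝔾 : 𝔾.Valid) (hℍ : ℍ.Valid) {u : α} {p : Fin r × Mark}
    (hu : 𝔾.iota u = some p) :
    (𝔾.abstr.comp ℍ.abstr).iota (Sum.inl p) = (𝔾.comp ℍ).iota (Sum.inl u) := by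
  classical
  refine iota_congr (abstr_left_of_iota hu) ?_
  rw [comp_right_inl hℍ.abstr, comp_right_inl hℍ, abstr_right_of_iota h𝔾 hu]
  refine if_congr ?_ rfl rfl
  simp only [Ident, abstr_right_of_iota h𝔾 hu]
  exact exists_abstr_iff hℍ (Φ := fun l o => (∃ i, 𝔾.right u = some i ∧ l = some i) ∧ o ≠ none)
    (by simp)

theorem comp_abstr_iota_inr (h𝔾 : 𝔾.Valid) (hℍ : ℍ.Valid) {v : β} {q : Fin r × Mark}
    (hv : ℍ.iota v = some q) :
    (𝔾.abstr.comp ℍ.abstr).iota (Sum.inr q) = (𝔾.comp ℍ).iota (Sum.inr v) := by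
  classical
  refine iota_congr rfl ?_
  rw [comp_right_inr, comp_right_inr, abstr_right_of_iota hℍ hv]
  exact if_congr (merged_abstr_iff h𝔾 hv) rfl rfl

def sumIota (𝔾 : BIGraph r α) (ℍ : BIGraph r β) :
    α ⊕ β → Option ((Fin r × Mark) ⊕ (Fin r × Mark)) :=
  Sum.elim (fun u => (𝔾.iota u).map Sum.inl) (fun v => (ℍ.iota v).map Sum.inr)

@[simp]
theorem sumIota_inl (u : α) : sumIota 𝔾 ℍ (Sum.inl u) = (𝔾.iota u).map Sum.inl :=
  rfl

@[simp]
theorem sumIota_inr (v : β) : sumIota 𝔾 ℍ (Sum.inr v) = (ℍ.iota v).map Sum.inr :=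
  rfl

theorem sumIota_inj (h𝔾 : 𝔾.Valid) (hℍ : ℍ.Valid) {a a' : α ⊕ β}
    {x : (Fin r × Mark) ⊕ (Fin r × Mark)} (h : sumIota 𝔾 ℍ a = some x)
    (h' : sumIota 𝔾 ℍ a' = some x) : a = a' := by
  rcases a with u | v <;> rcases a' with u' | v' <;>
    simp only [sumIota_inl, sumIota_inr, Option.map_eq_some_iff] at h h' <;>
    obtain ⟨p, hp, rfl⟩ := h <;> obtain ⟨p', hp', h'⟩ := h' <;> cases h'
  · rw [iota_inj h𝔾 hp hp']
  · rw [iota_inj hℍ hp hp']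

theorem exists_iota_of_ident {u : α} {v : β} (h : Ident 𝔾 ℍ u v) :
    (∃ p, 𝔾.iota u = some p) ∧ ∃ q, ℍ.iota v = some q := by
  obtain ⟨i, hu, hv⟩ := h
  exact ⟨Option.ne_none_iff_exists'.1 (iota_ne_none_of (Φ := fun _ o => o = some i) (by simp) hu),
    Option.ne_none_iff_exists'.1 (iota_ne_none_of (Φ := fun l _ => l = some i) (by simp) hv)⟩

theorem sumIota_compInr (h𝔾 : 𝔾.Valid) (v : β) :
    sumIota 𝔾 ℍ (compInr 𝔾 ℍ v) = (ℍ.iota v).map (compInr 𝔾.abstr ℍ.abstr) := by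
  by_cases hm : Merged 𝔾 ℍ v
  · obtain ⟨u, huv⟩ := hm
    obtain ⟨⟨p, hp⟩, ⟨q, hq⟩⟩ := exists_iota_of_ident huv
    rw [(compInr_eq_inl_iff h𝔾).2 huv, sumIota_inl, hp, hq, Option.map_some, Option.map_some,
      (compInr_eq_inl_iff h𝔾.abstr).2 ((ident_abstr_iff h𝔾 hp hq).2 huv)]
  · rw [compInr_of_not_merged hm, sumIota_inr]
    cases hq : ℍ.iota v with
    | none => rfl
    | some q => simp [compInr_of_not_merged ((merged_abstr_iff h𝔾 hq).not.2 hm)]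

theorem comp_abstr_iota_of_sumIota (h𝔾 : 𝔾.Valid) (hℍ : ℍ.Valid) {a : α ⊕ β}
    {x : (Fin r × Mark) ⊕ (Fin r × Mark)} (h : sumIota 𝔾 ℍ a = some x) :
    (𝔾.abstr.comp ℍ.abstr).iota x = (𝔾.comp ℍ).iota a := by
  rcases a with u | v <;> obtain ⟨p, hp, rfl⟩ := Option.map_eq_some_iff.1 h
  · exact comp_abstr_iota_inl h𝔾 hℍ hp
  · exact comp_abstr_iota_inr h𝔾 hℍ hp

theorem comp_iota_eq_none_of_sumIota (hℍ : ℍ.Valid) {a : α ⊕ β} (h : sumIota 𝔾 ℍ a = none) :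
    (𝔾.comp ℍ).iota a = none := by
  rcases a with u | v
  · exact comp_iota_inl_eq_none hℍ (Option.map_eq_none_iff.1 h)
  · exact comp_iota_inr_eq_none (Option.map_eq_none_iff.1 h)

theorem exists_sumIota_of_iota (hℍ : ℍ.Valid) {x : (Fin r × Mark) ⊕ (Fin r × Mark)}
    (h : (𝔾.abstr.comp ℍ.abstr).iota x ≠ none) : ∃ a, sumIota 𝔾 ℍ a = some x := by
  rcases x with p | q
  · obtain ⟨u, hu⟩ := exists_iota_of_abstr (mt (comp_iota_inl_eq_none hℍ.abstr) h)
    exact ⟨Sum.inl u, by simp [hu]⟩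
  · obtain ⟨v, hv⟩ := exists_iota_of_abstr (mt comp_iota_inr_eq_none h)
    exact ⟨Sum.inr v, by simp [hv]⟩

section Side

variable {σ V W : Type*} {𝕊 : BIGraph r σ} {φ : σ → V} {ψ : Fin r × Mark → W}
  {f : V → Option W}

theorem exists_of_map_abstr_adj (hf : ∀ s, f (φ s) = (𝕊.iota s).map ψ) {x z : W}
    (h : Relation.Map 𝕊.abstr.graph.Adj ψ ψ x z) : ∃ c, f c = some z := by
  obtain ⟨p, p', ⟨-, s, s', -, hs', -⟩, -, rfl⟩ := h
  exact ⟨φ s', by simp [hf, hs']⟩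

theorem map_abstr_adj_iff (hf : ∀ s, f (φ s) = (𝕊.iota s).map ψ)
    (hinj : ∀ {a a' x}, f a = some x → f a' = some x → a = a') {a c : V} {x z : W}
    (ha : f a = some x) (hc : f c = some z) (hxz : x ≠ z) :
    Relation.Map 𝕊.abstr.graph.Adj ψ ψ x z ↔
      Relation.Map (𝕊.graph.ReachableThrough (𝕊.iota · = none)) φ φ a c := by
  constructor
  · rintro ⟨p, p', ⟨-, s, s', hs, hs', h⟩, rfl, rfl⟩
    exact ⟨s, s', h, hinj (by simp [hf, hs]) ha, hinj (by simp [hf, hs']) hc⟩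
  · rintro ⟨s, s', h, rfl, rfl⟩
    obtain ⟨p, hp, rfl⟩ := Option.map_eq_some_iff.1 ((hf s).symm.trans ha)
    obtain ⟨p', hp', rfl⟩ := Option.map_eq_some_iff.1 ((hf s').symm.trans hc)
    exact ⟨p, p', ⟨fun h => hxz (h ▸ rfl), s, s', hp, hp', h⟩, rfl, rfl⟩

end Side

theorem comp_reachableThrough_iff (h𝔾 : 𝔾.Valid) (hℍ : ℍ.Valid) {a c : α ⊕ β} (hac : a ≠ c) :
    (𝔾.comp ℍ).graph.ReachableThrough (sumIota 𝔾 ℍ · = none) a c ↔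
      Relation.Map (𝔾.graph.ReachableThrough (𝔾.iota · = none)) Sum.inl Sum.inl a c ∨
      Relation.Map (ℍ.graph.ReachableThrough (ℍ.iota · = none)) (compInr 𝔾 ℍ) (compInr 𝔾 ℍ)
        a c := by
  constructor
  · -- an unkept vertex is not glued, so both edges through it lie on the same side
    intro h
    refine (h.head_induction_on (R := fun a => a = c ∨
      Relation.Map (𝔾.graph.ReachableThrough (𝔾.iota · = none)) Sum.inl Sum.inl a c ∨
      Relation.Map (ℍ.graph.ReachableThrough (ℍ.iota · = none)) (compInr 𝔾 ℍ) (compInr 𝔾 ℍ) a c)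
      (Or.inl rfl) fun {a t} hat ih ht => ?_).resolve_left hac
    by_cases htc : t = c
    · subst htc
      exact Or.inr (((comp_adj_iff h𝔾 hℍ).1 hat).imp
        (fun ⟨u, u', h, hu, hu'⟩ => ⟨u, u', h.reachableThrough, hu, hu'⟩)
        (fun ⟨v, v', h, hv, hv'⟩ => ⟨v, v', h.reachableThrough, hv, hv'⟩))
    replace ht := ht htc
    rcases (comp_adj_iff h𝔾 hℍ).1 hat with ⟨u, s, hus, rfl, rfl⟩ | ⟨v, s, hvs, rfl, rfl⟩ <;>
      rcases ih with rfl | ⟨s', u', hs', hs's, rfl⟩ | ⟨s', v', hs', hs's, rfl⟩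
    · exact absurd rfl htc
    · cases hs's
      exact Or.inr (Or.inl ⟨u, u', hus.reachableThrough.trans hs' fun _ => by simpa using ht,
        rfl, rfl⟩)
    · obtain ⟨⟨p, hp⟩, -⟩ := exists_iota_of_ident (ident_of_compInr_eq_inl hs's)
      simp [hp] at ht
    · exact absurd rfl htc
    · obtain ⟨⟨p, hp⟩, -⟩ := exists_iota_of_ident (ident_of_compInr_eq_inl hs's.symm)
      rw [← hs's] at ht
      simp [hp] at ht
    · cases compInr_injective h𝔾 hℍ hs's
      rw [sumIota_compInr h𝔾, Option.map_eq_none_iff] at ht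
      exact Or.inr (Or.inr ⟨v, v', hvs.reachableThrough.trans hs' fun _ => ht, rfl, rfl⟩)
  · rintro (⟨u, u', h, rfl, rfl⟩ | ⟨v, v', h, rfl, rfl⟩)
    · exact h.map (inlHom 𝔾 ℍ) fun t ht => by
        change sumIota 𝔾 ℍ (Sum.inl t) = none
        simp [ht]
    · exact h.map (compInrHom hℍ) fun t ht => by
        change sumIota 𝔾 ℍ (compInr 𝔾 ℍ t) = none
        simp [sumIota_compInr h𝔾, ht]

theorem isAbstraction_sumIota (h𝔾 : 𝔾.Valid) (hℍ : ℍ.Valid) :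
    IsAbstraction (sumIota 𝔾 ℍ) (𝔾.comp ℍ).graph (𝔾.abstr.comp ℍ.abstr).graph where
  injective := sumIota_inj h𝔾 hℍ
  exists_of_adj h := by
    rcases (comp_adj_iff h𝔾.abstr hℍ.abstr).1 h with h | h
    · exact exists_of_map_abstr_adj (φ := Sum.inl) (fun _ => rfl) h
    · exact exists_of_map_abstr_adj (sumIota_compInr h𝔾) h
  adj_iff {a c x z} ha hc := by
    by_cases hac : a = c
    · subst hac
      cases ha.symm.trans hc
      simp
    have hxz : x ≠ z := fun e => hac (sumIota_inj h𝔾 hℍ ha (e ▸ hc))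
    rw [comp_adj_iff h𝔾.abstr hℍ.abstr, comp_reachableThrough_iff h𝔾 hℍ hac,
      map_abstr_adj_iff (φ := Sum.inl) (ψ := Sum.inl) (fun _ => rfl) (sumIota_inj h𝔾 hℍ) ha hc hxz,
      map_abstr_adj_iff (sumIota_compInr h𝔾) (sumIota_inj h𝔾 hℍ) ha hc hxz]
    simp [hac]

end BIGraph

/-- For valid bi-interface graphs of arity `r`, abstraction commutes
with composition: `⌈𝔾·ℍ⌉ = ⌈⌈𝔾⌉·⌈ℍ⌉⌉`. Hence abstraction is a semigroup homomorphism
onto basic bi-interface graphs equipped with `𝔸 ⊙ 𝔹 = ⌈𝔸·𝔹⌉`. -/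
theorem stmt17 {r : ℕ} {α β : Type*} (𝔾 : BIGraph r α) (ℍ : BIGraph r β)
    (h𝔾 : 𝔾.Valid) (hℍ : ℍ.Valid) :
    (𝔾.comp ℍ).abstr = ((𝔾.abstr).comp (ℍ.abstr)).abstr :=
  BIGraph.abstr_eq_of_isAbstraction (BIGraph.isAbstraction_sumIota h𝔾 hℍ)
    (BIGraph.comp_abstr_iota_of_sumIota h𝔾 hℍ) (BIGraph.comp_iota_eq_none_of_sumIota hℍ)
    (BIGraph.exists_sumIota_of_iota hℍ)
end
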